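/- arXiv:2509.22025 — 7 statements merged into one kernel-verified Lean document; each statement's English description precedes it below -/
import Mathlib

section
/- With R = O_{C_p^♭} as above, for two rank-1 Frobenius modules O(−α) and O(−β) (with φ(e) = d^α e and φ(e') = d^β e' respectively), the group of R-linear Frobenius-equivariant homomorphisms Hom_φ(O(−α), O(−β)) is nonzero if and only if α ≥ β. -/
/-- Cancellation lemma: if `dpow x * u = dpow y * v` with `u, v` units, then `x = y`. -/
theorem dpow_unit_eq
    {O : Type} [CommRing O] [IsDomain O]
    (dpow : ℚ → O)
    (hdpow_add : ∀ a b : ℚ, 0 ≤ a → 0 ≤ b → dpow (a + b) = dpow a * dpow b)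
    (hdpow_ne : ∀ a : ℚ, 0 ≤ a → dpow a ≠ 0)
    (hdpow_unit : ∀ a : ℚ, 0 ≤ a → (IsUnit (dpow a) ↔ a = 0))
    {x y : ℚ} (hx : 0 ≤ x) (hy : 0 ≤ y) {u v : O} (hu : IsUnit u) (hv : IsUnit v)
    (h : dpow x * u = dpow y * v) : x = y := by
  rcases le_total x y with hle | hle
  · by_contra hne
    have hd : 0 ≤ y - x := by linarith
    have hsplit : dpow y = dpow x * dpow (y - x) := by
      have := hdpow_add x (y - x) hx hd
      simpa using this
    rw [hsplit] at h
    have hcancel : u = dpow (y - x) * v := by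
      have hx0 : dpow x ≠ 0 := hdpow_ne x hx
      have : dpow x * u = dpow x * (dpow (y - x) * v) := by ring_nf; ring_nf at h; linear_combination h
      exact mul_left_cancel₀ hx0 this
    have : IsUnit (dpow (y - x)) := by
      rcases hv with ⟨vu, rfl⟩
      have : dpow (y - x) = u * (vu⁻¹ : Oˣ) := by
        rw [hcancel, mul_assoc, Units.mul_inv, mul_one]
      rw [this]
      exact hu.mul (Units.isUnit _)
    have := (hdpow_unit (y - x) hd).mp this
    apply hne; linarith
  · by_contra hne
    have hd : 0 ≤ x - y := by linarith
    have hsplit : dpow x = dpow y * dpow (x - y) := by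
      have := hdpow_add y (x - y) hy hd
      simpa using this
    rw [hsplit] at h
    have hcancel : dpow (x - y) * u = v := by
      have hy0 : dpow y ≠ 0 := hdpow_ne y hy
      have : dpow y * (dpow (x - y) * u) = dpow y * v := by linear_combination h
      exact mul_left_cancel₀ hy0 this
    have : IsUnit (dpow (x - y)) := by
      rcases hu with ⟨uu, rfl⟩
      have : dpow (x - y) = v * (uu⁻¹ : Oˣ) := by
        rw [← hcancel, mul_assoc, Units.mul_inv, mul_one]
      rw [this]
      exact hv.mul (Units.isUnit _)
    have := (hdpow_unit (x - y) hd).mp this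
    apply hne; linarith

/-- for rank-one Frobenius modules `O(-α)`, `O(-β)` over the tilt
`O = O_{C_p^♭}` (modelled as in the classification of rank-one Frobenius modules:
`O(-α)` is the free rank-one module `O·e` with semilinear Frobenius `φ(e) = d^α e`,
realised concretely as `O` with the `φR`-semilinear map `x ↦ d^α · φR x`), the group
`Hom_φ(O(-α), O(-β))` of `O`-linear Frobenius-equivariant homomorphisms is nonzero
if and only if `α ≥ β`. -/
theorem stmt2
    {p : ℕ} (hp : 1 < p)
    {O : Type} [CommRing O] [IsDomain O]
    (dpow : ℚ → O)
    (hdpow_zero : dpow 0 = 1)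
    (hdpow_add : ∀ a b : ℚ, 0 ≤ a → 0 ≤ b → dpow (a + b) = dpow a * dpow b)
    (hdpow_ne : ∀ a : ℚ, 0 ≤ a → dpow a ≠ 0)
    (hdpow_unit : ∀ a : ℚ, 0 ≤ a → (IsUnit (dpow a) ↔ a = 0))
    (hval : ∀ r : O, r ≠ 0 → ∃ a : ℚ, 0 ≤ a ∧ ∃ u : Oˣ, r = dpow a * (u : O))
    (φR : O →+* O)
    (hφR : ∀ a : ℚ, 0 ≤ a → φR (dpow a) = dpow (p * a))
    (α β : ℚ) (hα : 0 ≤ α) (hβ : 0 ≤ β) :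
    (∃ f : O →ₗ[O] O, f ≠ 0 ∧
        ∀ x : O, f (dpow α * φR x) = dpow β * φR (f x)) ↔ β ≤ α := by
  have hp1 : (1 : ℚ) < (p : ℚ) := by exact_mod_cast hp
  constructor
  · rintro ⟨f, hf0, hfeq⟩
    have hfx : ∀ x : O, f x = x * f 1 := by
      intro x
      calc f x = f (x • 1) := by simp
        _ = x • f 1 := f.map_smul x 1
        _ = x * f 1 := by simp [smul_eq_mul]
    have hcne : f 1 ≠ 0 := by
      intro h
      apply hf0
      ext
      rw [hfx 1, h, mul_zero, LinearMap.zero_apply]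
    obtain ⟨a, ha, u, hu⟩ := hval (f 1) hcne
    have key := hfeq 1
    rw [map_one, mul_one, hfx (dpow α)] at key
    -- key : dpow α * c = dpow β * φR c
    rw [hu, map_mul, hφR a ha] at key
    -- dpow α * (dpow a * u) = dpow β * (dpow (p*a) * φR u)
    have h1 : dpow (α + a) * (u : O) = dpow (β + p * a) * φR u := by
      rw [hdpow_add α a hα ha, hdpow_add β (p * a) hβ (by positivity)]
      linear_combination key
    have heq : α + a = β + p * a :=
      dpow_unit_eq dpow hdpow_add hdpow_ne hdpow_unit
        (by linarith) (by positivity) (Units.isUnit u) ((Units.isUnit u).map φR) h1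
    nlinarith
  · intro hle
    set a : ℚ := (α - β) / (p - 1) with hadef
    have ha : 0 ≤ a := by
      apply div_nonneg <;> linarith
    refine ⟨dpow a • LinearMap.id, ?_, ?_⟩
    · intro h
      have : dpow a = 0 := by
        have := LinearMap.congr_fun h 1
        simpa using this
      exact hdpow_ne a ha this
    · intro x
      simp only [LinearMap.smul_apply, LinearMap.id_apply, smul_eq_mul, map_mul,
        hφR a ha]
      have hsum : a + α = β + p * a := by
        have hp0 : (p : ℚ) - 1 ≠ 0 := by linarith
        have h2 : a * ((p : ℚ) - 1) = α - β := by rw [hadef]; exact div_mul_cancel₀ _ hp0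
        linarith
      calc dpow a * (dpow α * φR x) = dpow (a + α) * φR x := by
            rw [hdpow_add a α ha hα]; ring
        _ = dpow (β + p * a) * φR x := by rw [hsum]
        _ = dpow β * (dpow (p * a) * φR x) := by
            rw [hdpow_add β (p * a) hβ (by positivity)]; ring
end

section
/- Let M be a finite free module of rank r over O_{C_p^♭} with Frobenius-semilinear φ, an isomorphism after inverting d. If F^• and G^• are two Frobenius-stable decreasing filtrations of M whose graded pieces are O(−α_i) and O(−β_i) respectively (α_i, β_i ∈ ℚ_{≥0}), then Σα_i = Σβ_i. Consequently the total slope TS(M) := Σα_i is well-defined. -/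

private lemma dpow_sum_aux {O : Type} [CommRing O] (dpow : ℚ → O)
    (hdpow_zero : dpow 0 = 1)
    (hdpow_add : ∀ a b : ℚ, 0 ≤ a → 0 ≤ b → dpow (a + b) = dpow a * dpow b)
    {ι : Type} (s : Finset ι) (f : ι → ℚ) (hf : ∀ i ∈ s, 0 ≤ f i) :
    dpow (∑ i ∈ s, f i) = ∏ i ∈ s, dpow (f i) := by
  induction s using Finset.cons_induction with
  | empty => simpa using hdpow_zero
  | cons a s ha ih =>
    rw [Finset.sum_cons, Finset.prod_cons,
      hdpow_add _ _ (hf a (Finset.mem_cons_self a s))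
        (Finset.sum_nonneg fun i hi => hf i (Finset.mem_cons_of_mem hi)),
      ih (fun i hi => hf i (Finset.mem_cons_of_mem hi))]

/-- well-definedness of the total slope.  Let `M` be a finite free module
of rank `r` over the tilt `O = O_{C_p^♭}` with a Frobenius-semilinear map `φ` that is an
isomorphism after inverting `d`.  If `F^•` and `G^•` are two Frobenius-stable decreasing
filtrations of `M` with graded pieces `O(-α_i)` resp. `O(-β_i)` — equivalently, if there
are two bases of `M` in which the matrix of `φ` is upper triangular with diagonal
entries `d^{α_i}` resp. `d^{β_i}` — then `Σ α_i = Σ β_i`.  Hence the total slope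
`TS(M) := Σ α_i` is well-defined. -/
theorem stmt4
    {p : ℕ} (hp : 1 < p)
    {O : Type} [CommRing O] [IsDomain O]
    (dpow : ℚ → O)
    (hdpow_zero : dpow 0 = 1)
    (hdpow_add : ∀ a b : ℚ, 0 ≤ a → 0 ≤ b → dpow (a + b) = dpow a * dpow b)
    (hdpow_ne : ∀ a : ℚ, 0 ≤ a → dpow a ≠ 0)
    (hdpow_unit : ∀ a : ℚ, 0 ≤ a → (IsUnit (dpow a) ↔ a = 0))
    (hval : ∀ r : O, r ≠ 0 → ∃ a : ℚ, 0 ≤ a ∧ ∃ u : Oˣ, r = dpow a * (u : O))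
    (φR : O →+* O)
    (hφR : ∀ a : ℚ, 0 ≤ a → φR (dpow a) = dpow (p * a))
    {M : Type} [AddCommGroup M] [Module O M] [Module.Free O M] [Module.Finite O M]
    (r : ℕ) (hrank : Module.finrank O M = r)
    (φ : M →ₛₗ[φR] M)
    (hφ_inj : Function.Injective φ)
    (hφ_cok : ∀ y : M, ∃ (n : ℚ) (x : M), 0 ≤ n ∧ dpow n • y = φ x)
    -- a Frobenius-stable filtration with graded pieces O(-α_i)
    (B : Module.Basis (Fin r) O M) (α : Fin r → ℚ) (A : Matrix (Fin r) (Fin r) O)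
    (hα : ∀ i, 0 ≤ α i)
    (hBA : ∀ j, φ (B j) = ∑ i, A i j • B i)
    (hAtri : ∀ i j, j < i → A i j = 0)
    (hAdiag : ∀ j, A j j = dpow (α j))
    -- a second Frobenius-stable filtration with graded pieces O(-β_i)
    (C : Module.Basis (Fin r) O M) (β : Fin r → ℚ) (A' : Matrix (Fin r) (Fin r) O)
    (hβ : ∀ i, 0 ≤ β i)
    (hCA' : ∀ j, φ (C j) = ∑ i, A' i j • C i)
    (hA'tri : ∀ i j, j < i → A' i j = 0)
    (hA'diag : ∀ j, A' j j = dpow (β j)) :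
    ∑ i, α i = ∑ i, β i := by
  classical
  set P : Matrix (Fin r) (Fin r) O := B.toMatrix C with hP
  set Q : Matrix (Fin r) (Fin r) O := C.toMatrix B with hQ
  have hPQ : P * Q = 1 := Module.Basis.toMatrix_mul_toMatrix_flip B C
  have hkey : A * P.map φR = P * A' := by
    ext k j
    have h1 : φ (C j) = ∑ kk, (∑ i, A kk i * φR (P i j)) • B kk := by
      have hCj : C j = ∑ i, P i j • B i := by
        simp only [hP, Module.Basis.toMatrix_apply]
        exact (B.sum_repr (C j)).symm
      rw [hCj, map_sum]
      simp only [LinearMap.map_smulₛₗ, hBA, Finset.smul_sum, smul_smul]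
      rw [Finset.sum_comm]
      simp only [Finset.sum_smul, mul_comm]
    have h2 : φ (C j) = ∑ kk, (∑ i, P kk i * A' i j) • B kk := by
      rw [hCA' j]
      have hCi : ∀ i, C i = ∑ kk, P kk i • B kk := by
        intro i
        simp only [hP, Module.Basis.toMatrix_apply]
        exact (B.sum_repr (C i)).symm
      simp only [hCi, Finset.smul_sum, smul_smul]
      rw [Finset.sum_comm]
      simp only [Finset.sum_smul, mul_comm]
    have h3 := h1.symm.trans h2
    have h4 : ∀ kk, (∑ i, A kk i * φR (P i j)) = (∑ i, P kk i * A' i j) := by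
      intro kk
      have := congrArg (fun x => (B.repr x) kk) h3
      simpa [Finsupp.single_apply, Finset.sum_ite_eq'] using this
    simpa [Matrix.mul_apply, Matrix.map_apply] using h4 k
  have hdet := congrArg Matrix.det hkey
  rw [Matrix.det_mul, Matrix.det_mul] at hdet
  have hdetA : A.det = dpow (∑ i, α i) := by
    rw [Matrix.det_of_upperTriangular (fun i j h => hAtri i j h)]
    rw [dpow_sum_aux dpow hdpow_zero hdpow_add _ _ (fun i _ => hα i)]
    exact Finset.prod_congr rfl fun i _ => hAdiag i
  have hdetA' : A'.det = dpow (∑ i, β i) := by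
    rw [Matrix.det_of_upperTriangular (fun i j h => hA'tri i j h)]
    rw [dpow_sum_aux dpow hdpow_zero hdpow_add _ _ (fun i _ => hβ i)]
    exact Finset.prod_congr rfl fun i _ => hA'diag i
  have hmapdet : (P.map φR).det = φR P.det := (RingHom.map_det φR P).symm
  have hPunit : IsUnit P.det := by
    have := congrArg Matrix.det hPQ
    rw [Matrix.det_mul, Matrix.det_one] at this
    exact IsUnit.of_mul_eq_one _ this
  have hφPunit : IsUnit (φR P.det) := hPunit.map φR
  have hSα : (0:ℚ) ≤ ∑ i, α i := Finset.sum_nonneg fun i _ => hα i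
  have hSβ : (0:ℚ) ≤ ∑ i, β i := Finset.sum_nonneg fun i _ => hβ i
  rw [hdetA, hdetA', hmapdet] at hdet
  -- hdet : dpow Sα * φR P.det = P.det * dpow Sβ
  rcases le_total (∑ i, α i) (∑ i, β i) with hle | hle
  · have hsplit : dpow (∑ i, β i) = dpow (∑ i, α i) * dpow (∑ i, β i - ∑ i, α i) := by
      rw [← hdpow_add _ _ hSα (by linarith)]; ring_nf
    rw [hsplit] at hdet
    have hcancel : φR P.det = P.det * dpow (∑ i, β i - ∑ i, α i) := by
      have hne : dpow (∑ i, α i) ≠ 0 := hdpow_ne _ hSα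
      apply mul_left_cancel₀ hne
      rw [hdet]; ring
    have hunit : IsUnit (dpow (∑ i, β i - ∑ i, α i)) :=
      isUnit_of_mul_isUnit_right (hcancel ▸ hφPunit)
    have := (hdpow_unit _ (by linarith)).mp hunit
    linarith
  · have hsplit : dpow (∑ i, α i) = dpow (∑ i, β i) * dpow (∑ i, α i - ∑ i, β i) := by
      rw [← hdpow_add _ _ hSβ (by linarith)]; ring_nf
    rw [hsplit] at hdet
    have hcancel : dpow (∑ i, α i - ∑ i, β i) * φR P.det = P.det := by
      have hne : dpow (∑ i, β i) ≠ 0 := hdpow_ne _ hSβ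
      apply mul_left_cancel₀ hne
      rw [← mul_assoc, hdet]; ring
    have hunit : IsUnit (dpow (∑ i, α i - ∑ i, β i)) :=
      isUnit_of_mul_isUnit_left (hcancel ▸ hPunit)
    have := (hdpow_unit _ (by linarith)).mp hunit
    linarith
end

section
/- Let p = 2 and let M = O_{C_p^♭}^2 with semilinear Frobenius given in the standard basis by the matrix [[d^2, 1],[0, d^{1/2}]]. Then there exists a unit x ∈ O_{C_p^♭} with dx^2 + x + 1 = 0 and x ≡ 1 mod d, the vectors (x, d^{1/2}) and (0,1) form a basis of M, and in this new basis the matrix of φ is [[d, x^{-1}],[0, x d^{3/2}]]. In particular M admits one Frobenius-stable flag with graded slopes (2, 1/2) and another with graded slopes (1, 3/2), so the multiset of slopes of a Frobenius-stable flag is not an invariant of (M, φ). -/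
/-- slopes of a Frobenius-stable flag are not invariants.  Let `p = 2` and
`O = O_{C_2^♭}` (modelled as a henselian local domain of characteristic `2` with
divisible-ℚ-valued valuation measured by `dpow` and squaring Frobenius `φR x = x²`),
and let `M = O²` with the semilinear Frobenius given in the standard basis by the
matrix `[[d², 1],[0, d^{1/2}]]`.  Then there is a unit `x ∈ O` with `d x² + x + 1 = 0`
and `x ≡ 1 mod d`; the vectors `(x, d^{1/2})` and `(0,1)` form a basis of `M`; and in
this new basis the matrix of `φ` is `[[d, x⁻¹],[0, x d^{3/2}]]`.  In particular `M`
admits one Frobenius-stable flag with graded slopes `(2, 1/2)` and another with graded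
slopes `(1, 3/2)`, so the multiset of slopes of a Frobenius-stable flag is not an
invariant of `(M, φ)` (indeed `{2, 1/2} ≠ {1, 3/2}` as multisets). -/
theorem stmt7
    {O : Type} [CommRing O] [IsDomain O] [HenselianLocalRing O]
    (hchar : (2 : O) = 0)
    (dpow : ℚ → O)
    (hdpow_zero : dpow 0 = 1)
    (hdpow_add : ∀ a b : ℚ, 0 ≤ a → 0 ≤ b → dpow (a + b) = dpow a * dpow b)
    (hdpow_ne : ∀ a : ℚ, 0 ≤ a → dpow a ≠ 0)
    (hdpow_unit : ∀ a : ℚ, 0 ≤ a → (IsUnit (dpow a) ↔ a = 0))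
    (hval : ∀ r : O, r ≠ 0 → ∃ a : ℚ, 0 ≤ a ∧ ∃ u : Oˣ, r = dpow a * (u : O))
    (φR : O →+* O)
    (hφR_pow : ∀ y : O, φR y = y ^ 2)
    (φ : (Fin 2 → O) →ₛₗ[φR] (Fin 2 → O))
    (hφ : ∀ v : Fin 2 → O,
      φ v = ![dpow 2 * φR (v 0) + φR (v 1), dpow (1/2) * φR (v 1)]) :
    ∃ x : Oˣ,
      dpow 1 * (x : O) ^ 2 + (x : O) + 1 = 0 ∧
      (∃ y : O, (x : O) = 1 + dpow 1 * y) ∧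
      ∃ B : Module.Basis (Fin 2) O (Fin 2 → O),
        B 0 = ![(x : O), dpow (1/2)] ∧
        B 1 = ![0, 1] ∧
        φ (B 0) = dpow 1 • B 0 ∧
        φ (B 1) = ((x⁻¹ : Oˣ) : O) • B 0 + ((x : O) * dpow (3/2)) • B 1 ∧
        ({2, 1/2} : Multiset ℚ) ≠ ({1, 3/2} : Multiset ℚ) := by
  classical
  set d := dpow 1 with hd
  have hd_notunit : ¬ IsUnit d := by
    intro h
    have := (hdpow_unit 1 (by norm_num)).mp h
    norm_num at this
  -- Hensel's lemma for g = X² + X + d at 1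
  obtain ⟨s, hs_root, hs_mem⟩ :=
    HenselianLocalRing.is_henselian (R := O)
      (Polynomial.X ^ 2 + Polynomial.X + Polynomial.C d)
      (by monicity!) 1
      (by
        simp only [Polynomial.eval_add, Polynomial.eval_pow, Polynomial.eval_X,
          Polynomial.eval_C, one_pow]
        have h1 : (1 : O) + 1 + d = d := by linear_combination hchar
        rw [h1]
        exact hd_notunit)
      (by
        have h1 : Polynomial.eval 1 (Polynomial.derivative
            (Polynomial.X ^ 2 + Polynomial.X + Polynomial.C d)) = 1 := by
          simp
          linear_combination hchar
        rw [h1]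
        exact isUnit_one)
  have hs : s ^ 2 + s + d = 0 := by
    simpa [Polynomial.IsRoot] using hs_root
  -- s is a unit
  have hs_unit : IsUnit s := by
    by_contra h
    have hsm : s ∈ IsLocalRing.maximalIdeal O := h
    have h1m : (1 : O) ∈ IsLocalRing.maximalIdeal O := by
      have : s - (s - 1) ∈ IsLocalRing.maximalIdeal O := Ideal.sub_mem _ hsm hs_mem
      simpa using this
    exact (IsLocalRing.maximalIdeal.isMaximal O).ne_top (Ideal.eq_top_of_isUnit_mem _ h1m isUnit_one)
  obtain ⟨u, hu⟩ := hs_unit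
  set x : O := ((u⁻¹ : Oˣ) : O) with hxdef
  have hxs : x * s = 1 := by
    rw [hxdef, ← hu]
    exact_mod_cast Units.inv_mul u
  have hx : d * x ^ 2 + x + 1 = 0 := by
    linear_combination x ^ 2 * hs - (x * s + 1) * hxs - x * hxs
  have hx1 : x = 1 + d * x ^ 2 := by
    linear_combination hx + (-1 - d * x ^ 2) * hchar
  have hsxd : s + x * d = 1 := by
    have hs0 : s ≠ 0 := by
      intro h0
      rw [h0, mul_zero] at hxs
      exact zero_ne_one hxs
    have h2 : s * (s + x * d) = s * 1 := by
      linear_combination hs + d * hxs - s * hchar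
    exact mul_left_cancel₀ hs0 h2
  have hdp2 : dpow 2 = d * d := by
    rw [hd, ← hdpow_add 1 1 (by norm_num) (by norm_num)]
    norm_num
  have hdph : dpow (1/2) * dpow (1/2) = d := by
    rw [hd, ← hdpow_add (1/2) (1/2) (by norm_num) (by norm_num)]
    norm_num
  have hdp32 : dpow (3/2) = dpow (1/2) * d := by
    rw [hd, ← hdpow_add (1/2) 1 (by norm_num) (by norm_num)]
    norm_num
  -- the basis
  let e : (Fin 2 → O) ≃ₗ[O] (Fin 2 → O) :=
  { toFun := fun c => ![x * c 0, dpow (1/2) * c 0 + c 1]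
    map_add' := by
      intro a b
      funext i
      fin_cases i <;> simp [Matrix.cons_val_zero, Matrix.cons_val_one] <;> ring
    map_smul' := by
      intro r a
      funext i
      fin_cases i <;> simp [Matrix.cons_val_zero, Matrix.cons_val_one] <;> ring
    invFun := fun v => ![s * v 0, v 1 - dpow (1/2) * (s * v 0)]
    left_inv := by
      intro c
      funext i
      fin_cases i
      · simp only [Matrix.cons_val_zero, Matrix.cons_val_one, Matrix.head_cons, Fin.isValue,
          Fin.zero_eta]
        linear_combination (c 0) * hxs
      · simp only [Matrix.cons_val_zero, Matrix.cons_val_one, Matrix.head_cons, Fin.isValue,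
          Fin.mk_one]
        linear_combination (-dpow (1/2) * c 0) * hxs
    right_inv := by
      intro v
      funext i
      fin_cases i
      · simp only [Matrix.cons_val_zero, Matrix.cons_val_one, Matrix.head_cons, Fin.isValue,
          Fin.zero_eta]
        linear_combination (v 0) * hxs
      · simp only [Matrix.cons_val_zero, Matrix.cons_val_one, Matrix.head_cons, Fin.isValue,
          Fin.mk_one]
        ring }
  let B : Module.Basis (Fin 2) O (Fin 2 → O) := Module.Basis.ofEquivFun e.symm
  have hB : ∀ i, B i = e (Pi.single i 1) := by
    intro i
    simp only [B, Module.Basis.coe_ofEquivFun, LinearEquiv.symm_symm]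
  have hB0 : B 0 = ![x, dpow (1/2)] := by
    rw [hB 0]
    show ![x * _, dpow (1/2) * _ + _] = _
    funext i
    fin_cases i <;> simp [Pi.single_apply]
  have hB1 : B 1 = ![0, 1] := by
    rw [hB 1]
    show ![x * _, dpow (1/2) * _ + _] = _
    funext i
    fin_cases i <;> simp [Pi.single_apply]
  refine ⟨u⁻¹, hx, ⟨x ^ 2, hx1⟩, B, hB0, hB1, ?_, ?_, by
    intro h
    have h2 : (2:ℚ) ∈ ({1, 3/2} : Multiset ℚ) := by
      rw [← h]; exact Multiset.mem_cons_self _ _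
    simp only [Multiset.insert_eq_cons, Multiset.mem_cons, Multiset.mem_singleton] at h2
    norm_num at h2⟩
  · rw [hB0, hφ]
    funext i
    fin_cases i
    · simp only [Matrix.cons_val_zero, Matrix.cons_val_one, Matrix.head_cons, Fin.zero_eta,
        Fin.isValue, Pi.smul_apply, smul_eq_mul, hφR_pow]
      linear_combination x ^ 2 * hdp2 + hdph + d * hx - d * x * hchar
    · simp only [Matrix.cons_val_zero, Matrix.cons_val_one, Matrix.head_cons, Fin.mk_one,
        Fin.isValue, Pi.smul_apply, smul_eq_mul, hφR_pow]
      linear_combination dpow (1/2) * hdph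
  · rw [hB1, hB0, hφ]
    have hinv : (((u⁻¹)⁻¹ : Oˣ) : O) = s := by rw [inv_inv]; exact hu
    funext i
    fin_cases i
    · simp only [Matrix.cons_val_zero, Matrix.cons_val_one, Matrix.head_cons, Fin.zero_eta,
        Fin.isValue, Pi.add_apply, Pi.smul_apply, smul_eq_mul, hφR_pow, hinv]
      linear_combination -hxs
    · simp only [Matrix.cons_val_zero, Matrix.cons_val_one, Matrix.head_cons, Fin.mk_one,
        Fin.isValue, Pi.add_apply, Pi.smul_apply, smul_eq_mul, hφR_pow, hinv]
      linear_combination (-dpow (1/2)) * hsxd - x * hdp32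
end

section
/- Let M = O_{C_p^♭}^2 with semilinear Frobenius φ given in the standard basis by the matrix [[0, d],[1, 0]]. Then the fixed set M^{φ = d} := Ker(φ − d·id) equals {(a^p d^{p/(p²−1)}, a d^{1/(p²−1)}) : a ∈ F_{p²}}, which is a 2-dimensional F_p-vector space, even though the total slope TS(M) = 1 ≠ 2·1, so M is not isomorphic to O(−1) ⊕ O(−1). -/
set_option maxHeartbeats 1600000

open Polynomial in
lemma aux_root_bound {R : Type*} [CommRing R] [IsDomain R] {n : ℕ} (hn : 2 ≤ n)
    (s : Finset R) (hs : ∀ x ∈ s, x ^ n = x) : s.card ≤ n := by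
  classical
  set P : R[X] := X ^ n - X with hP
  have hPne : P ≠ 0 := by
    intro h
    have : P.coeff n = 0 := by rw [h]; simp
    rw [hP, coeff_sub, coeff_X_pow, coeff_X, if_pos rfl,
      if_neg (by omega : ¬ (1 = n))] at this
    norm_num at this
  have hdeg : P.natDegree ≤ n := by
    calc P.natDegree ≤ max (X ^ n : R[X]).natDegree (X : R[X]).natDegree :=
          natDegree_sub_le _ _
      _ ≤ n := by simp; omega
  have hsub : s ⊆ P.roots.toFinset := by
    intro x hx
    rw [Multiset.mem_toFinset, mem_roots hPne]
    simp [hP, IsRoot, hs x hx, sub_eq_zero]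
  calc s.card ≤ P.roots.toFinset.card := Finset.card_le_card hsub
    _ ≤ Multiset.card P.roots := Multiset.toFinset_card_le _
    _ ≤ P.natDegree := P.card_roots'
    _ ≤ n := hdeg



/-- a Frobenius module with large fixed space but small total slope.
Let `M = O²` over the tilt `O = O_{C_p^♭}` (char-`p` domain with divisible-ℚ-valued
valuation measured by `dpow` and `p`-power Frobenius `φR x = x^p`, whose residue field
contains `F_{p²}` lifted via a ring embedding `ι : F → O` of a field `F` with `p²`
elements), with semilinear Frobenius given in the standard basis by the matrix
`[[0, d],[1, 0]]`, i.e. `φ(v₀, v₁) = (d·φR v₁, φR v₀)`.  Then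
`M^{φ=d} = Ker(φ - d·id) = {(ι(a^p)·d^{p/(p²-1)}, ι(a)·d^{1/(p²-1)}) : a ∈ F_{p²}}`,
which is a 2-dimensional `F_p`-vector space, even though `TS(M) = 1 ≠ 2·1` (witnessed
by a Frobenius-stable flag with slopes summing to `1`), so `M` is not isomorphic to
`O(-1) ⊕ O(-1)` (it has no basis of eigenvectors for `d`). -/
theorem stmt8
    {p : ℕ} [Fact p.Prime]
    {O : Type} [CommRing O] [IsDomain O]
    (hchar : (p : O) = 0)
    (dpow : ℚ → O)
    (hdpow_zero : dpow 0 = 1)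
    (hdpow_add : ∀ a b : ℚ, 0 ≤ a → 0 ≤ b → dpow (a + b) = dpow a * dpow b)
    (hdpow_ne : ∀ a : ℚ, 0 ≤ a → dpow a ≠ 0)
    (hdpow_unit : ∀ a : ℚ, 0 ≤ a → (IsUnit (dpow a) ↔ a = 0))
    (hval : ∀ r : O, r ≠ 0 → ∃ a : ℚ, 0 ≤ a ∧ ∃ u : Oˣ, r = dpow a * (u : O))
    (φR : O →+* O)
    (hφR_pow : ∀ y : O, φR y = y ^ p)
    {F : Type} [Field F] [Fintype F] (hF : Fintype.card F = p ^ 2)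
    (ι : F →+* O)
    (φ : (Fin 2 → O) →ₛₗ[φR] (Fin 2 → O))
    (hφ : ∀ v : Fin 2 → O, φ v = ![dpow 1 * φR (v 1), φR (v 0)]) :
    -- the fixed set of φ = d·id is exactly the claimed F_{p²}-parametrised set
    {v : Fin 2 → O | φ v = dpow 1 • v} =
      {v : Fin 2 → O | ∃ a : F,
        v = ![ι (a ^ p) * dpow ((p : ℚ) / ((p : ℚ) ^ 2 - 1)),
              ι a * dpow (1 / ((p : ℚ) ^ 2 - 1))]} ∧
    -- it is a 2-dimensional F_p-vector space
    Nonempty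
      ((φ.toAddMonoidHom - DistribMulAction.toAddMonoidHom (Fin 2 → O) (dpow 1)).ker
        ≃+ (Fin 2 → ZMod p)) ∧
    -- TS(M) = 1: a Frobenius-stable flag with slopes summing to 1
    (∃ (B : Module.Basis (Fin 2) O (Fin 2 → O)) (α : Fin 2 → ℚ)
        (A : Matrix (Fin 2) (Fin 2) O),
      (∀ i, 0 ≤ α i) ∧
      (∀ j, φ (B j) = ∑ i, A i j • B i) ∧
      (∀ i j, j < i → A i j = 0) ∧
      (∀ j, A j j = dpow (α j)) ∧
      α 0 + α 1 = 1) ∧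
    -- so M is not isomorphic to O(-1) ⊕ O(-1)
    ¬ ∃ C : Module.Basis (Fin 2) O (Fin 2 → O), ∀ j, φ (C j) = dpow 1 • C j := by
  classical
  have hp2 : 2 ≤ p := (Fact.out : p.Prime).two_le
  have hp0 : p ≠ 0 := by omega
  have hpQ : (2:ℚ) ≤ (p:ℚ) := by exact_mod_cast hp2
  have hq2pos : (0:ℚ) < (p:ℚ) ^ 2 - 1 := by nlinarith
  have he1 : (0:ℚ) ≤ 1 / ((p:ℚ) ^ 2 - 1) := by positivity
  have hep : (0:ℚ) ≤ (p:ℚ) / ((p:ℚ) ^ 2 - 1) := by positivity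
  have hd0 : dpow 1 ≠ 0 := hdpow_ne 1 one_pos.le
  -- dpow of natural multiples
  have dpow_pow : ∀ (n : ℕ) (a : ℚ), 0 ≤ a → dpow ((n : ℚ) * a) = dpow a ^ n := by
    intro n
    induction n with
    | zero => intro a _; simp [hdpow_zero]
    | succ k ih =>
      intro a ha
      have : ((k+1 : ℕ) : ℚ) * a = (k:ℚ) * a + a := by push_cast; ring
      rw [this, hdpow_add _ _ (by positivity) ha, ih a ha, pow_succ]
  -- char of F is p
  haveI : CharP F (ringChar F) := ringChar.charP F
  obtain ⟨n0, hq0prime, hcard0⟩ := FiniteField.card F (ringChar F)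
  have hpq : ringChar F = p := by
    have hdvd : p ∣ (ringChar F) ^ (n0 : ℕ) := by
      rw [← hcard0, hF]; exact dvd_pow_self p two_ne_zero
    have := ((Fact.out : p.Prime)).dvd_of_dvd_pow hdvd
    exact ((Nat.prime_dvd_prime_iff_eq (Fact.out : p.Prime) hq0prime).mp this).symm
  haveI hcharF : CharP F p := hpq ▸ ringChar.charP F
  have hFpow : ∀ a : F, a ^ (p ^ 2) = a := by
    intro a; rw [← hF]; exact FiniteField.pow_card a
  -- existence of b ∈ F with b ≠ 0 and b^p = -b
  obtain ⟨b, hb0, hbp⟩ : ∃ b : F, b ≠ 0 ∧ b ^ p = -b := by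
    have hninj : ¬ Function.Injective (fun x : F => x ^ p + x) := by
      intro hinj
      set Rt := Finset.univ.filter (fun x : F => x ^ p = x) with hRt
      have h1 : Rt.card ≤ p := by
        refine aux_root_bound hp2 Rt ?_
        intro x hx; exact (Finset.mem_filter.mp hx).2
      have h2 : Finset.univ.image (fun x : F => x ^ p + x) ⊆ Rt := by
        intro y hy
        obtain ⟨x, _, rfl⟩ := Finset.mem_image.mp hy
        rw [hRt, Finset.mem_filter]
        refine ⟨Finset.mem_univ _, ?_⟩
        rw [add_pow_char _ _ p, ← pow_mul, ← pow_two, hFpow, add_comm]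
      have h3 : p ^ 2 ≤ p := by
        calc p ^ 2 = Fintype.card F := hF.symm
          _ = (Finset.univ.image (fun x : F => x ^ p + x)).card := by
              rw [Finset.card_image_of_injective _ hinj, Finset.card_univ]
          _ ≤ Rt.card := Finset.card_le_card h2
          _ ≤ p := h1
      nlinarith
    obtain ⟨x, y, hxy, hne⟩ := Function.not_injective_iff.mp hninj
    refine ⟨x - y, sub_ne_zero.mpr hne, ?_⟩
    rw [sub_pow_char]
    linear_combination hxy
  -- the key characterisation of the fixed set
  have hkey : ∀ v : Fin 2 → O, (φ v = dpow 1 • v) ↔ ∃ a : F,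
      v = ![ι (a ^ p) * dpow ((p : ℚ) / ((p : ℚ) ^ 2 - 1)),
            ι a * dpow (1 / ((p : ℚ) ^ 2 - 1))] := by
    intro v
    constructor
    · intro hv
      rw [hφ v] at hv
      have h0 : dpow 1 * (v 1) ^ p = dpow 1 * v 0 := by
        have := congrFun hv 0
        simpa [hφR_pow] using this
      have h1 : (v 0) ^ p = dpow 1 * v 1 := by
        have := congrFun hv 1
        simpa [hφR_pow] using this
      have hv0 : v 0 = (v 1) ^ p := (mul_left_cancel₀ hd0 h0).symm
      by_cases hz : v 1 = 0
      · refine ⟨0, ?_⟩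
        funext i
        fin_cases i <;>
          simp [hv0, hz, zero_pow hp0]
      · have hvp2 : (v 1) ^ (p ^ 2) = dpow 1 * v 1 := by
          rw [pow_two, pow_mul, ← hv0, h1]
        have hcancel : (v 1) ^ (p ^ 2 - 1) = dpow 1 := by
          have e : p ^ 2 = (p ^ 2 - 1) + 1 :=
            (Nat.sub_add_cancel (Nat.one_le_pow _ _ (by omega))).symm
          rw [e, pow_succ] at hvp2
          exact mul_right_cancel₀ hz hvp2
        obtain ⟨β, hβ0, u, hu⟩ := hval (v 1) hz
        set nn : ℕ := p ^ 2 - 1 with hnn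
        have hnnQ : (nn : ℚ) = (p:ℚ) ^ 2 - 1 := by
          rw [hnn]; push_cast [Nat.cast_sub (by nlinarith : 1 ≤ p ^ 2)]; ring
        have hequ : dpow ((nn:ℚ) * β) * (u : O) ^ nn = dpow 1 := by
          rw [dpow_pow nn β hβ0, ← mul_pow, ← hu, hcancel]
        have hβnn : (nn:ℚ) * β = 1 ∧ ((u : O)) ^ nn = 1 := by
          rcases le_or_gt 1 ((nn:ℚ) * β) with h | h
          · have hsplit : dpow ((nn:ℚ)*β) = dpow 1 * dpow ((nn:ℚ)*β - 1) := by
              rw [← hdpow_add 1 _ (by norm_num) (by linarith)]; ring_nf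
            rw [hsplit] at hequ
            have : dpow ((nn:ℚ)*β - 1) * (u:O) ^ nn = 1 := by
              apply mul_left_cancel₀ hd0
              rw [← mul_assoc, hequ, mul_one]
            have hzero : (nn:ℚ)*β - 1 = 0 :=
              (hdpow_unit _ (by linarith)).mp (IsUnit.of_mul_eq_one _ this)
            constructor
            · linarith
            · rw [hzero, hdpow_zero, one_mul] at this; exact this
          · exfalso
            have hsplit : dpow 1 = dpow ((nn:ℚ)*β) * dpow (1 - (nn:ℚ)*β) := by
              rw [← hdpow_add _ _ (mul_nonneg (by positivity) hβ0) (by linarith)]; ring_nf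
            rw [hsplit] at hequ
            have : (u:O) ^ nn = dpow (1 - (nn:ℚ)*β) :=
              mul_left_cancel₀ (hdpow_ne _ (mul_nonneg (by positivity) hβ0)) hequ
            have : IsUnit (dpow (1 - (nn:ℚ)*β)) := by
              rw [← this]; exact (u ^ nn).isUnit
            have := (hdpow_unit _ (by linarith)).mp this
            linarith
        obtain ⟨hβ1, hun⟩ := hβnn
        have hnn0 : (nn:ℚ) ≠ 0 := by rw [hnnQ]; positivity
        have hβval : β = 1 / ((p:ℚ)^2 - 1) := by
          rw [← hnnQ, eq_div_iff hnn0]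
          linarith [hβ1]
        -- u is a root of X^{p²} - X, hence in the image of ι
        have hup2 : ((u : O)) ^ (p ^ 2) = (u : O) := by
          have e : p ^ 2 = nn + 1 := by
            rw [hnn]
            exact (Nat.sub_add_cancel (Nat.one_le_pow _ _ (by omega))).symm
          rw [e, pow_succ, hun, one_mul]
        obtain ⟨a, ha⟩ : ∃ a : F, ι a = (u : O) := by
          by_contra h
          push_neg at h
          set S := insert ((u : O)) (Finset.univ.image ι) with hS
          have hcard : S.card = p ^ 2 + 1 := by
            rw [hS, Finset.card_insert_of_notMem, Finset.card_image_of_injective _ ι.injective,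
              Finset.card_univ, hF]
            intro hmem
            obtain ⟨a, _, ha⟩ := Finset.mem_image.mp hmem
            exact h a ha
          have hle : S.card ≤ p ^ 2 := by
            refine aux_root_bound (by nlinarith) S ?_
            intro x hx
            rcases Finset.mem_insert.mp hx with rfl | hx
            · exact hup2
            · obtain ⟨a, _, rfl⟩ := Finset.mem_image.mp hx
              rw [← map_pow, hFpow]
          rw [hcard] at hle
          exact Nat.not_succ_le_self _ hle
        refine ⟨a, ?_⟩
        have hv1 : v 1 = ι a * dpow (1 / ((p:ℚ)^2 - 1)) := by
          rw [hu, hβval, ha, mul_comm]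
        funext i
        fin_cases i
        · show v 0 = ι (a ^ p) * dpow ((p : ℚ) / ((p : ℚ) ^ 2 - 1))
          rw [hv0, hv1, mul_pow, ← map_pow, ← dpow_pow p _ he1, mul_one_div]
        · exact hv1
    · rintro ⟨a, rfl⟩
      rw [hφ]
      funext i
      have hstep : dpow (1 / ((p:ℚ)^2-1)) ^ p = dpow ((p:ℚ) / ((p:ℚ)^2-1)) := by
        rw [← dpow_pow p _ he1, mul_one_div]
      fin_cases i
      · show dpow 1 * φR (ι a * dpow (1 / ((p:ℚ)^2-1))) =
          dpow 1 * (ι (a ^ p) * dpow ((p : ℚ) / ((p : ℚ) ^ 2 - 1)))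
        rw [hφR_pow, mul_pow, ← map_pow, hstep]
      · show φR (ι (a ^ p) * dpow ((p:ℚ) / ((p:ℚ)^2-1))) =
          dpow 1 * (ι a * dpow (1 / ((p:ℚ)^2-1)))
        rw [hφR_pow, mul_pow, ← map_pow, ← pow_mul, ← pow_two, hFpow,
          ← dpow_pow p _ hep]
        have harith : (p:ℚ) * ((p:ℚ) / ((p:ℚ)^2-1)) = 1 + 1 / ((p:ℚ)^2-1) := by
          field_simp
          ring
        rw [harith, hdpow_add 1 _ (by norm_num) he1]
        ring
  refine ⟨Set.ext (fun v => hkey v), ?_, ?_, ?_⟩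
  · -- the additive equivalence with (Fin 2 → ZMod p)
    set K := (φ.toAddMonoidHom - DistribMulAction.toAddMonoidHom (Fin 2 → O) (dpow 1)).ker
      with hK
    have hmemK : ∀ x : Fin 2 → O, x ∈ K ↔ φ x = dpow 1 • x := by
      intro x
      rw [hK, AddMonoidHom.mem_ker, AddMonoidHom.sub_apply, sub_eq_zero]
      constructor
      · intro h; exact h
      · intro h; exact h
    set vecF : F → (Fin 2 → O) := fun a =>
      ![ι (a ^ p) * dpow ((p : ℚ) / ((p : ℚ) ^ 2 - 1)),
        ι a * dpow (1 / ((p : ℚ) ^ 2 - 1))] with hvecF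
    have hmem : ∀ a : F, vecF a ∈ K := fun a => (hmemK _).mpr ((hkey _).mpr ⟨a, rfl⟩)
    have hadd : ∀ a b : F, vecF (a + b) = vecF a + vecF b := by
      intro a b
      have hfr : ι ((a + b) ^ p) = ι (a ^ p) + ι (b ^ p) := by
        rw [add_pow_char a b p, map_add]
      funext i
      fin_cases i <;>
        simp only [hvecF, Pi.add_apply, Matrix.cons_val_zero, Matrix.cons_val_one,
          Matrix.head_cons] <;>
        rw [hfr, map_add, add_mul] <;> simp [add_mul]
    have hzero : vecF 0 = 0 := by
      funext i
      fin_cases i <;> simp [hvecF, zero_pow hp0]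
    set g : F →+ K :=
      { toFun := fun a => ⟨vecF a, hmem a⟩
        map_zero' := by ext : 1; simp [hzero]
        map_add' := by intro a b; ext : 1; simp [hadd] } with hg
    have hbij : Function.Bijective g := by
      constructor
      · intro a b hab
        have h1 : vecF a = vecF b := congrArg Subtype.val hab
        have := congrFun h1 1
        simp only [hvecF] at this
        have h2 : ι a = ι b :=
          mul_right_cancel₀ (hdpow_ne _ he1) (by simpa using this)
        exact ι.injective h2
      · rintro ⟨x, hx⟩
        obtain ⟨a, ha⟩ := (hkey x).mp ((hmemK x).mp hx)
        exact ⟨a, Subtype.ext ha.symm⟩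
    haveI : Algebra (ZMod p) F := ZMod.algebra F p
    have hrank : Module.finrank (ZMod p) F = 2 := by
      have hcard := Module.card_eq_pow_finrank (K := ZMod p) (V := F)
      rw [ZMod.card, hF] at hcard
      exact (Nat.pow_right_injective hp2 hcard.symm)
    let bF := (Module.finBasis (ZMod p) F).reindex (finCongr hrank)
    exact ⟨(AddEquiv.ofBijective g hbij).symm.trans bF.equivFun.toAddEquiv⟩
  · -- the flag
    have hp1pos : (0:ℚ) < (p:ℚ) + 1 := by positivity
    have hc1 : (0:ℚ) ≤ 1 / ((p:ℚ) + 1) := by positivity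
    set c : O := dpow (1 / ((p:ℚ) + 1)) with hc
    have hcp1 : c ^ (p + 1) = dpow 1 := by
      rw [hc, ← dpow_pow (p+1) _ hc1]
      congr 1
      push_cast
      field_simp
    have hcp : c ^ p = dpow ((p:ℚ) / ((p:ℚ) + 1)) := by
      rw [hc, ← dpow_pow p _ hc1, mul_one_div]
    set δ : O := ι b with hδ
    have hδp : δ ^ p = -δ := by rw [hδ, ← map_pow, hbp, map_neg]
    set binv : O := ι b⁻¹ with hbinv
    have hδinv : δ * binv = 1 := by
      rw [hδ, hbinv, ← map_mul, mul_inv_cancel₀ hb0, map_one]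
    set M : Matrix (Fin 2) (Fin 2) O := Matrix.of ![![c, δ], ![1, 0]] with hM
    set N : Matrix (Fin 2) (Fin 2) O := Matrix.of ![![0, 1], ![binv, -(c*binv)]] with hN
    have hMN : M * N = 1 := by
      ext i j
      fin_cases i <;> fin_cases j <;>
        simp [hM, hN, Matrix.mul_apply, Fin.sum_univ_two, Matrix.one_apply] <;>
        first
        | linear_combination (c : O) * hδinv
        | linear_combination (-(c : O)) * hδinv
        | linear_combination hδinv
        | ring
    have hNM : N * M = 1 := by
      ext i j
      fin_cases i <;> fin_cases j <;>
        simp [hM, hN, Matrix.mul_apply, Fin.sum_univ_two, Matrix.one_apply] <;>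
        first
        | linear_combination hδinv
        | linear_combination (c : O) * hδinv
        | ring
    set e : (Fin 2 → O) ≃ₗ[O] (Fin 2 → O) :=
      LinearEquiv.ofLinear (Matrix.toLin' M) (Matrix.toLin' N)
        (by rw [← Matrix.toLin'_mul, hMN, Matrix.toLin'_one])
        (by rw [← Matrix.toLin'_mul, hNM, Matrix.toLin'_one]) with he
    set B := (Pi.basisFun O (Fin 2)).map e with hB
    have hBj : ∀ j, B j = fun i => M i j := by
      intro j
      funext i
      rw [hB, Module.Basis.map_apply, Pi.basisFun_apply, he]
      simp [Matrix.toLin'_apply, Matrix.mulVec_single]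
    have hB0 : B 0 = ![c, 1] := by
      rw [hBj 0]; funext i; fin_cases i <;> simp [hM]
    have hB1 : B 1 = ![δ, 0] := by
      rw [hBj 1]; funext i; fin_cases i <;> simp [hM]
    clear_value B e M N
    clear hB he hBj hM hN hMN hNM
    refine ⟨B, ![(p:ℚ)/((p:ℚ)+1), 1/((p:ℚ)+1)],
      Matrix.of ![![dpow ((p:ℚ)/((p:ℚ)+1)), -δ], ![0, c]], ?_, ?_, ?_, ?_, ?_⟩
    · intro i; fin_cases i <;> simp <;> positivity
    · intro j
      rw [Fin.sum_univ_two]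
      fin_cases j
      · show φ (B 0) = _
        rw [hB0, hB1, hφ]
        funext i
        fin_cases i
        · simp [hφR_pow]
          rw [← hcp1, pow_succ, hcp]
        · simp [hφR_pow]
          exact hcp
      · show φ (B 1) = _
        rw [hB0, hB1, hφ]
        funext i
        fin_cases i
        · simp [hφR_pow, zero_pow hp0]
          ring
        · simp [hφR_pow, hδp]
    · intro i j hij
      fin_cases i <;> fin_cases j <;> first | exact absurd hij (by decide) | simp
    · intro j
      fin_cases j
      · simp
      · show _ = dpow (![(p:ℚ)/((p:ℚ)+1), 1/((p:ℚ)+1)] 1)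
        simp [hc, one_div]
    · show (p:ℚ)/((p:ℚ)+1) + 1/((p:ℚ)+1) = 1
      field_simp
  · -- no eigenbasis
    rintro ⟨C, hC⟩
    have hrep := Module.Basis.sum_repr C (fun _ => (1:O))
    have h0 : (1:O) = ∑ j : Fin 2, (C.repr (fun _ => (1:O))) j * (C j 0) := by
      have := congrFun hrep 0
      rw [Fin.sum_univ_two] at this ⊢
      simpa using this.symm
    have hcols : ∀ j : Fin 2, ∃ a : F, C j 0 = ι (a ^ p) * dpow ((p:ℚ) / ((p:ℚ)^2-1)) := by
      intro j
      obtain ⟨a, ha⟩ := (hkey (C j)).mp (hC j)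
      exact ⟨a, by rw [ha]; rfl⟩
    obtain ⟨a0, ha0⟩ := hcols 0
    obtain ⟨a1, ha1⟩ := hcols 1
    have hsplitp : dpow ((p:ℚ) / ((p:ℚ)^2-1)) =
        dpow (1 / ((p:ℚ)^2-1)) * dpow (((p:ℚ)-1) / ((p:ℚ)^2-1)) := by
      rw [← hdpow_add _ _ he1 (div_nonneg (by linarith) (le_of_lt hq2pos))]
      congr 1
      field_simp
      ring
    have hunit : IsUnit (dpow (1 / ((p:ℚ)^2-1))) := by
      apply IsUnit.of_mul_eq_one
        ((C.repr (fun _ => (1:O))) 0 * (ι (a0 ^ p) * dpow (((p:ℚ)-1)/((p:ℚ)^2-1))) +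
         (C.repr (fun _ => (1:O))) 1 * (ι (a1 ^ p) * dpow (((p:ℚ)-1)/((p:ℚ)^2-1))))
      rw [Fin.sum_univ_two, ha0, ha1, hsplitp] at h0
      linear_combination -h0
    have := (hdpow_unit _ he1).mp hunit
    have : (1:ℚ) / ((p:ℚ)^2-1) > 0 := by positivity
    linarith [((hdpow_unit _ he1).mp hunit)]
end

section
/- Let M be a finite free O_{C_p^♭}-module of rank r with Frobenius-semilinear φ, an isomorphism after inverting d, and suppose TS(M) = ir for some i ∈ ℚ_{≥0}. Then dim_{F_p} M^{φ = d^i} = r if and only if M is isomorphic (Frobenius-equivariantly) to O(−i)^{⊕ r}. -/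
/-- Let `M` be a finite free module of rank `r` over the tilt
`O = O_{C_p^♭}` (char `p`, `p`-power Frobenius `φR`, valuation with divisible value
group measured by `dpow`, algebraically closed fraction field encoded by monic
polynomials over `O` having roots, and `(p-1)`-st roots of units) with a
Frobenius-semilinear `φ` which is an isomorphism after inverting `d`, and suppose
`TS(M) = i·r` for some `i ∈ ℚ_{≥0}` (the total slope being computed from any
Frobenius-stable full flag, i.e. a basis in which `φ` is upper triangular with
diagonal `d^{α_j}` and `Σ α_j = i·r`).  Then `dim_{F_p} M^{φ = d^i} = r` (expressed as
`Ker(φ - d^i) ≃ (ZMod p)^r` as additive groups) if and only if `M` is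
Frobenius-equivariantly isomorphic to `O(-i)^{⊕r}` (i.e. `M` has a basis of
eigenvectors `φ(C j) = d^i • C j`). -/
theorem stmt9
    {p : ℕ} [Fact p.Prime]
    {O : Type} [CommRing O] [IsDomain O]
    (hchar : (p : O) = 0)
    (dpow : ℚ → O)
    (hdpow_zero : dpow 0 = 1)
    (hdpow_add : ∀ a b : ℚ, 0 ≤ a → 0 ≤ b → dpow (a + b) = dpow a * dpow b)
    (hdpow_ne : ∀ a : ℚ, 0 ≤ a → dpow a ≠ 0)
    (hdpow_unit : ∀ a : ℚ, 0 ≤ a → (IsUnit (dpow a) ↔ a = 0))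
    (hval : ∀ r : O, r ≠ 0 → ∃ a : ℚ, 0 ≤ a ∧ ∃ u : Oˣ, r = dpow a * (u : O))
    (hac : ∀ f : Polynomial O, f.Monic → ∃ x : O, f.IsRoot x)
    (φR : O →+* O)
    (hφR_pow : ∀ x : O, φR x = x ^ p)
    (hroot : ∀ u : Oˣ, ∃ w : Oˣ, w ^ (p - 1) = u)
    {M : Type} [AddCommGroup M] [Module O M] [Module.Free O M] [Module.Finite O M]
    (r : ℕ) (hr : 1 ≤ r) (hrank : Module.finrank O M = r)
    (φ : M →ₛₗ[φR] M)
    (hφ_inj : Function.Injective φ)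
    (hφ_cok : ∀ y : M, ∃ (n : ℚ) (x : M), 0 ≤ n ∧ dpow n • y = φ x)
    (i : ℚ) (hi : 0 ≤ i)
    -- TS(M) = i·r, witnessed by a Frobenius-stable full flag
    (B : Module.Basis (Fin r) O M) (α : Fin r → ℚ) (A : Matrix (Fin r) (Fin r) O)
    (hα : ∀ j, 0 ≤ α j)
    (hBA : ∀ j, φ (B j) = ∑ k, A k j • B k)
    (hAtri : ∀ k j, j < k → A k j = 0)
    (hAdiag : ∀ j, A j j = dpow (α j))
    (hTS : ∑ j, α j = i * r) :
    Nonempty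
        ((φ.toAddMonoidHom - DistribMulAction.toAddMonoidHom M (dpow i)).ker ≃+
          (Fin r → ZMod p)) ↔
      ∃ C : Module.Basis (Fin r) O M, ∀ j, φ (C j) = dpow i • C j := by
  classical
  have hp : p.Prime := Fact.out
  haveI hcharP : CharP O p := (CharP.charP_iff_prime_eq_zero hp).2 hchar
  haveI : NeZero p := ⟨hp.ne_zero⟩
  set ι : ZMod p →+* O := ZMod.castHom (dvd_refl p) O with hιdef
  have hι_inj : Function.Injective ι := ZMod.castHom_injective O
  -- elements fixed by x ↦ x^p lie in the prime field
  have hFp_fixed : ∀ x : O, x ^ p = x → ∃ c : ZMod p, ι c = x := by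
    intro x hx
    by_contra hc
    push_neg at hc
    set g : Polynomial O := Polynomial.X ^ p - Polynomial.X with hg
    have hg1 : g.coeff 1 = -1 := by
      simp [hg, Polynomial.coeff_X_pow, hp.one_lt.ne]
    have hgne : g ≠ 0 := fun h => by simp [h] at hg1
    have hdeg : g.natDegree ≤ p := by
      refine le_trans (Polynomial.natDegree_sub_le _ _) ?_
      simp [Polynomial.natDegree_X_pow, Polynomial.natDegree_X, hp.one_lt.le]
    have hxmem : x ∉ Finset.univ.image (fun c : ZMod p => ι c) := by
      simp only [Finset.mem_image]
      rintro ⟨c, -, hcx⟩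
      exact hc c hcx
    set Z : Finset O := insert x (Finset.univ.image (fun c : ZMod p => ι c)) with hZ
    have hcard : Z.card = p + 1 := by
      rw [hZ, Finset.card_insert_of_notMem hxmem,
        Finset.card_image_of_injective _ hι_inj, Finset.card_univ, ZMod.card]
    have hsub : Z.val ⊆ g.roots := by
      intro z hz
      rw [Finset.mem_val] at hz
      rw [Polynomial.mem_roots hgne]
      rw [hZ, Finset.mem_insert] at hz
      rcases hz with hz | hz
      · subst hz
        simp [hg, Polynomial.IsRoot, hx]
      · simp only [Finset.mem_image] at hz
        obtain ⟨c, -, rfl⟩ := hz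
        have : (ι c) ^ p = ι c := by
          rw [← map_pow, ZMod.pow_card]
        simp [hg, Polynomial.IsRoot, this]
    have := Polynomial.card_le_degree_of_subset_roots hsub
    omega
  -- torsion-freeness
  have hsmul : ∀ (c : O) (m : M), c ≠ 0 → c • m = 0 → m = 0 := by
    intro c m hc h
    rcases smul_eq_zero.1 h with h | h
    · exact absurd h hc
    · exact h
  -- kernel membership
  have hmemK : ∀ m : M,
      (m ∈ (φ.toAddMonoidHom - DistribMulAction.toAddMonoidHom M (dpow i)).ker ↔
        φ m = dpow i • m) := by
    intro m
    rw [AddMonoidHom.mem_ker, AddMonoidHom.sub_apply, sub_eq_zero]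
    rfl
  -- dpow arithmetic
  have hdpow_nat : ∀ (n : ℕ) (a : ℚ), 0 ≤ a → dpow a ^ n = dpow (n * a) := by
    intro n a ha
    induction n with
    | zero => simp [hdpow_zero]
    | succ n ih =>
      rw [pow_succ, ih, ← hdpow_add (n * a) a (by positivity) ha]
      congr 1
      push_cast
      ring
  have hdpow_sum : ∀ s : Finset (Fin r), ∏ j ∈ s, dpow (α j) = dpow (∑ j ∈ s, α j) := by
    intro s
    induction s using Finset.induction with
    | empty => simp [hdpow_zero]
    | insert _ _ h ih =>
      rw [Finset.prod_insert h, Finset.sum_insert h, ih,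
        ← hdpow_add _ _ (hα _) (Finset.sum_nonneg fun j _ => hα j)]
  constructor
  · rintro ⟨e⟩
    set y : Fin r → ((φ.toAddMonoidHom - DistribMulAction.toAddMonoidHom M (dpow i)).ker) :=
      fun j => e.symm (Pi.single j 1) with hy
    set x : Fin r → M := fun j => (y j : M) with hxdef
    have hx : ∀ j, φ (x j) = dpow i • x j := fun j => (hmemK _).1 (y j).2
    -- F_p-linear independence of the x's
    have hFp_ind : ∀ cz : Fin r → ZMod p, ∑ j, ι (cz j) • x j = 0 → cz = 0 := by
      intro cz h
      have h1 : ∀ j, ι (cz j) • x j = (cz j).val • x j := by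
        intro j
        rw [← Nat.cast_smul_eq_nsmul O]
        congr 1
        rw [hιdef]
        simp [ZMod.natCast_val]
      have hvs : ∑ j, (cz j).val • x j = 0 := by
        rw [← h]
        exact Finset.sum_congr rfl fun j _ => (h1 j).symm
      have h2 : ∑ j, (cz j).val • y j = 0 := by
        apply Subtype.coe_injective
        push_cast
        exact hvs
      have h4 : ∑ j, (cz j).val • (Pi.single j (1 : ZMod p) : Fin r → ZMod p) = 0 := by
        have h3 := congrArg e h2
        rw [map_sum, map_zero] at h3
        simpa [hy, map_nsmul] using h3
      have h6 : ∀ j : Fin r, (cz j).val • (Pi.single j (1 : ZMod p) : Fin r → ZMod p)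
          = Pi.single j (cz j) := by
        intro j
        rw [← Pi.single_smul]
        congr 1
        rw [nsmul_eq_mul, mul_one, ZMod.natCast_val, ZMod.cast_id]
      rw [Finset.sum_congr rfl (fun j _ => h6 j), Finset.univ_sum_single] at h4
      exact h4
    -- Artin–Schreier style O-linear independence
    have hAS : ∀ (n : ℕ) (c : Fin r → O),
        (Finset.univ.filter fun j => c j ≠ 0).card ≤ n →
        ∑ j, c j • x j = 0 → ∀ j, c j = 0 := by
      intro n
      induction n with
      | zero =>
        intro c hcard hsum j
        by_contra hj
        have hmem : j ∈ Finset.univ.filter fun j => c j ≠ 0 :=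
          Finset.mem_filter.2 ⟨Finset.mem_univ _, hj⟩
        have := Finset.card_pos.2 ⟨j, hmem⟩
        omega
      | succ n ih =>
        intro c hcard hsum
        by_contra hne
        push_neg at hne
        obtain ⟨j1, hj1⟩ := hne
        set S := Finset.univ.filter (fun j => c j ≠ 0) with hS
        have hSne : S.Nonempty := ⟨j1, Finset.mem_filter.2 ⟨Finset.mem_univ _, hj1⟩⟩
        have haa : ∀ j, ∃ au : ℚ × Oˣ, c j ≠ 0 → (0 ≤ au.1 ∧ c j = dpow au.1 * au.2) := by
          intro j
          by_cases hcj : c j = 0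
          · exact ⟨(0, 1), fun h' => absurd hcj h'⟩
          · obtain ⟨a, ha, u, hu⟩ := hval (c j) hcj
            exact ⟨(a, u), fun _ => ⟨ha, hu⟩⟩
        choose au hau using haa
        obtain ⟨j0, hj0S, hj0min⟩ := S.exists_min_image (fun j => (au j).1) hSne
        have hcj0 : c j0 ≠ 0 := (Finset.mem_filter.1 hj0S).2
        obtain ⟨ha0, hc0⟩ := hau j0 hcj0
        set b : Fin r → O := fun j =>
          if c j = 0 then 0 else
            ((au j0).2⁻¹ : Oˣ) * dpow ((au j).1 - (au j0).1) * ((au j).2 : O) with hb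
        have hfac : ∀ j, c j = c j0 * b j := by
          intro j
          by_cases hcj : c j = 0
          · simp [hb, hcj]
          · obtain ⟨haj, hcj'⟩ := hau j hcj
            have hjS : j ∈ S := Finset.mem_filter.2 ⟨Finset.mem_univ _, hcj⟩
            have hle : (au j0).1 ≤ (au j).1 := hj0min j hjS
            have hdd : dpow (au j0).1 * dpow ((au j).1 - (au j0).1) = dpow (au j).1 := by
              rw [← hdpow_add _ _ ha0 (by linarith)]
              congr 1
              ring
            simp only [hb, if_neg hcj]
            rw [hc0, hcj']
            symm
            calc dpow (au j0).1 * ((au j0).2 : O) *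
                  (((au j0).2⁻¹ : Oˣ) * dpow ((au j).1 - (au j0).1) * ((au j).2 : O))
                = ((au j0).2 : O) * ((au j0).2⁻¹ : Oˣ) *
                  (dpow (au j0).1 * dpow ((au j).1 - (au j0).1)) * ((au j).2 : O) := by ring
              _ = dpow (au j).1 * ((au j).2 : O) := by
                  rw [Units.mul_inv, one_mul, hdd]
        have hb0 : b j0 = 1 := by
          simp [hb, hcj0, sub_self, hdpow_zero, Units.inv_mul]
        have hsb : ∑ j, b j • x j = 0 := by
          refine hsmul (c j0) _ hcj0 ?_
          rw [Finset.smul_sum, ← hsum]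
          exact Finset.sum_congr rfl fun j _ => by rw [smul_smul, ← hfac]
        have hsbp : ∑ j, (b j ^ p) • x j = 0 := by
          refine hsmul (dpow i) _ (hdpow_ne i hi) ?_
          have h1 : φ (∑ j, b j • x j) = dpow i • ∑ j, (b j ^ p) • x j := by
            rw [map_sum, Finset.smul_sum]
            refine Finset.sum_congr rfl fun j _ => ?_
            rw [LinearMap.map_smulₛₗ, hφR_pow, hx j, smul_smul, smul_smul, mul_comm]
          rw [hsb, map_zero] at h1
          exact h1.symm
        have hsub2 : ∑ j, (b j ^ p - b j) • x j = 0 := by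
          simp only [sub_smul]
          rw [Finset.sum_sub_distrib, hsbp, hsb, sub_zero]
        have hcard2 : (Finset.univ.filter fun j => (b j ^ p - b j) ≠ 0).card ≤ n := by
          have hsubset : (Finset.univ.filter fun j => (b j ^ p - b j) ≠ 0) ⊆ S.erase j0 := by
            intro j hj
            have hj' : b j ^ p - b j ≠ 0 := (Finset.mem_filter.1 hj).2
            have hbj : b j ≠ 0 := by
              intro h0
              apply hj'
              rw [h0]
              simp [hp.ne_zero]
            have hcj : c j ≠ 0 := by
              intro h0
              apply hbj
              simp [hb, h0]
            refine Finset.mem_erase.2 ⟨?_, Finset.mem_filter.2 ⟨Finset.mem_univ _, hcj⟩⟩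
            intro h0
            apply hj'
            rw [h0, hb0]
            simp
          have h1 := Finset.card_le_card hsubset
          have h2 : (S.erase j0).card = S.card - 1 := Finset.card_erase_of_mem hj0S
          have h3 : 1 ≤ S.card := Finset.card_pos.2 hSne
          omega
        have hball := ih _ hcard2 hsub2
        have hbfix : ∀ j, ∃ z : ZMod p, ι z = b j := by
          intro j
          apply hFp_fixed
          have := hball j
          have := sub_eq_zero.1 this
          exact this
        choose z hz using hbfix
        have hz0 : z = 0 := by
          apply hFp_ind
          rw [← hsb]
          exact Finset.sum_congr rfl fun j _ => by rw [hz j]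
        have : ι (z j0) = ι 1 := by rw [hz, hb0, map_one]
        have hz1 : z j0 = 1 := hι_inj this
        rw [hz0] at hz1
        exact one_ne_zero hz1.symm
    have hOind : ∀ c : Fin r → O, ∑ j, c j • x j = 0 → ∀ j, c j = 0 :=
      fun c => hAS _ c le_rfl
    -- the change of basis matrix
    set X : Matrix (Fin r) (Fin r) O := Matrix.of fun k j => B.repr (x j) k with hX
    have hxB : ∀ j, x j = ∑ k, X k j • B k := fun j => (B.sum_repr (x j)).symm
    have hkey : ∀ l j, ∑ k, A l k * X k j ^ p = dpow i * X l j := by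
      intro l j
      have h1 : φ (x j) = ∑ l, (∑ k, A l k * X k j ^ p) • B l := by
        rw [hxB j, map_sum]
        rw [show ∀ f : Fin r → M, (∑ k, f k) = ∑ k, f k from fun _ => rfl]
        calc ∑ k, φ (X k j • B k)
            = ∑ k, ∑ l, (A l k * X k j ^ p) • B l := by
              refine Finset.sum_congr rfl fun k _ => ?_
              rw [LinearMap.map_smulₛₗ, hφR_pow, hBA k, Finset.smul_sum]
              exact Finset.sum_congr rfl fun l _ => by rw [smul_smul, mul_comm]
          _ = ∑ l, ∑ k, (A l k * X k j ^ p) • B l := Finset.sum_comm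
          _ = ∑ l, (∑ k, A l k * X k j ^ p) • B l := by
              exact Finset.sum_congr rfl fun l _ => (Finset.sum_smul).symm
      have h2 : φ (x j) = ∑ l, (dpow i * X l j) • B l := by
        rw [hx j, hxB j, Finset.smul_sum]
        exact Finset.sum_congr rfl fun l _ => by rw [smul_smul]
      have h3 := h1.symm.trans h2
      have h4 : ∑ l, ((∑ k, A l k * X k j ^ p) - dpow i * X l j) • B l = 0 := by
        simp only [sub_smul]
        rw [Finset.sum_sub_distrib, ← h1, ← h2, sub_self]
      have h5 := (Fintype.linearIndependent_iff.1 B.linearIndependent) _ h4 l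
      simpa [sub_eq_zero] using h5
    have hmatrix : A * X.map φR = dpow i • X := by
      ext l j
      simp only [Matrix.mul_apply, Matrix.map_apply, Matrix.smul_apply, smul_eq_mul]
      rw [← hkey l j]
      exact Finset.sum_congr rfl fun k _ => by rw [hφR_pow]
    -- determinants
    have hdetA : A.det = dpow (i * r) := by
      have htri : A.BlockTriangular id := fun k j h => hAtri k j h
      rw [Matrix.det_of_upperTriangular htri]
      calc ∏ j, A j j = ∏ j, dpow (α j) := Finset.prod_congr rfl fun j _ => hAdiag j
        _ = dpow (∑ j, α j) := hdpow_sum _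
        _ = dpow (i * r) := by rw [hTS]
    have hdet_eq : dpow (i * r) * X.det ^ p = dpow (i * r) * X.det := by
      have h1 : (A * X.map φR).det = dpow (i * r) * X.det ^ p := by
        rw [Matrix.det_mul, hdetA]
        congr 1
        have hmd : (X.map φR).det = φR X.det := (RingHom.map_det φR X).symm
        rw [hmd, hφR_pow]
      have h2 : ((dpow i • X : Matrix (Fin r) (Fin r) O)).det = dpow (i * r) * X.det := by
        rw [Matrix.det_smul]
        congr 1
        rw [Fintype.card_fin, hdpow_nat r i hi]
        congr 1
        ring
      rw [← h1, ← h2, hmatrix]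
    have hfix : X.det ^ p = X.det :=
      mul_left_cancel₀ (hdpow_ne _ (by positivity)) hdet_eq
    have hdet_ne : X.det ≠ 0 := by
      intro h0
      obtain ⟨v, hv, hXv⟩ := (Matrix.exists_mulVec_eq_zero_iff).2 h0
      apply hv
      funext j
      refine hOind v ?_ j
      have : ∑ j, v j • x j = ∑ k, (X.mulVec v k) • B k := by
        calc ∑ j, v j • x j = ∑ j, ∑ k, (X k j * v j) • B k := by
              refine Finset.sum_congr rfl fun j _ => ?_
              rw [hxB j, Finset.smul_sum]
              exact Finset.sum_congr rfl fun k _ => by rw [smul_smul, mul_comm]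
          _ = ∑ k, ∑ j, (X k j * v j) • B k := Finset.sum_comm
          _ = ∑ k, (X.mulVec v k) • B k := by
              refine Finset.sum_congr rfl fun k _ => ?_
              rw [← Finset.sum_smul]
              rfl
      rw [this, hXv]
      simp
    obtain ⟨zd, hzd⟩ := hFp_fixed X.det hfix
    have hzd_ne : zd ≠ 0 := by
      intro h0
      apply hdet_ne
      rw [← hzd, h0, map_zero]
    have hdet_unit : IsUnit X.det := by
      rw [← hzd]
      exact (isUnit_iff_ne_zero.2 hzd_ne).map ι
    have hXinv : X * X⁻¹ = 1 := Matrix.mul_nonsing_inv X hdet_unit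
    have hli : LinearIndependent O x := by
      rw [Fintype.linearIndependent_iff]
      intro g hg
      exact hOind g hg
    have hspan : ⊤ ≤ Submodule.span O (Set.range x) := by
      have hBmem : ∀ k, B k ∈ Submodule.span O (Set.range x) := by
        intro k
        have : B k = ∑ j, (X⁻¹ j k) • x j := by
          calc B k = ∑ l, ((X * X⁻¹) l k) • B l := by
                rw [hXinv]
                simp [Matrix.one_apply]
            _ = ∑ l, (∑ j, X l j * X⁻¹ j k) • B l := by
                refine Finset.sum_congr rfl fun l _ => ?_
                rw [Matrix.mul_apply]
            _ = ∑ l, ∑ j, (X⁻¹ j k * X l j) • B l := by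
                refine Finset.sum_congr rfl fun l _ => ?_
                rw [Finset.sum_smul]
                exact Finset.sum_congr rfl fun j _ => by rw [mul_comm]
            _ = ∑ j, ∑ l, (X⁻¹ j k * X l j) • B l := Finset.sum_comm
            _ = ∑ j, (X⁻¹ j k) • x j := by
                refine Finset.sum_congr rfl fun j _ => ?_
                rw [hxB j, Finset.smul_sum]
                exact Finset.sum_congr rfl fun l _ => by rw [smul_smul]
        rw [this]
        exact Submodule.sum_mem _ fun j _ =>
          Submodule.smul_mem _ _ (Submodule.subset_span ⟨j, rfl⟩)
      rw [← B.span_eq]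
      rw [Submodule.span_le]
      rintro m ⟨k, rfl⟩
      exact hBmem k
    refine ⟨Module.Basis.mk hli hspan, ?_⟩
    intro j
    rw [Module.Basis.coe_mk]
    exact hx j
  · rintro ⟨C, hC⟩
    have hmem : ∀ a : Fin r → ZMod p,
        (∑ j, ι (a j) • C j) ∈
          (φ.toAddMonoidHom - DistribMulAction.toAddMonoidHom M (dpow i)).ker := by
      intro a
      rw [hmemK, map_sum, Finset.smul_sum]
      refine Finset.sum_congr rfl fun j _ => ?_
      rw [LinearMap.map_smulₛₗ, hφR_pow, hC j, ← map_pow, ZMod.pow_card,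
        smul_smul, smul_smul, mul_comm]
    set f : (Fin r → ZMod p) →+
        (φ.toAddMonoidHom - DistribMulAction.toAddMonoidHom M (dpow i)).ker :=
      { toFun := fun a => ⟨∑ j, ι (a j) • C j, hmem a⟩
        map_zero' := by
          apply Subtype.ext
          simp
        map_add' := by
          intro a b
          apply Subtype.ext
          simp [add_smul, Finset.sum_add_distrib] } with hf
    have hinj : Function.Injective f := by
      intro a b hab
      have h0 : f (a - b) = 0 := by rw [map_sub, hab, sub_self]
      have h1 : ∑ j, ι ((a - b) j) • C j = 0 := congrArg Subtype.val h0
      have h2 := (Fintype.linearIndependent_iff.1 C.linearIndependent)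
        (fun j => ι ((a - b) j)) h1
      have h3 : a - b = 0 := funext fun j => hι_inj (by simpa using h2 j)
      exact sub_eq_zero.1 h3
    have hsurj : Function.Surjective f := by
      rintro ⟨m, hm⟩
      rw [hmemK] at hm
      set c : Fin r → O := fun j => C.repr m j with hc
      have hm1 : m = ∑ j, c j • C j := (C.sum_repr m).symm
      have hfix : ∀ j, c j ^ p = c j := by
        intro j
        have h1 : φ m = ∑ j, (c j ^ p * dpow i) • C j := by
          rw [hm1, map_sum]
          refine Finset.sum_congr rfl fun j _ => ?_
          rw [LinearMap.map_smulₛₗ, hφR_pow, hC j, smul_smul]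
        have h2 : dpow i • m = ∑ j, (dpow i * c j) • C j := by
          rw [hm1, Finset.smul_sum]
          refine Finset.sum_congr rfl fun j _ => ?_
          rw [smul_smul]
        have hsum0 : ∑ k, (c k ^ p * dpow i - dpow i * c k) • C k = 0 := by
          simp only [sub_smul]
          rw [Finset.sum_sub_distrib, ← h1, ← h2, hm, sub_self]
        have h4 := (Fintype.linearIndependent_iff.1 C.linearIndependent _ hsum0) j
        have h5 : c j ^ p * dpow i = dpow i * c j := by
          simpa [sub_eq_zero] using h4
        have h6 : dpow i * c j ^ p = dpow i * c j := by rw [← h5]; ring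
        exact mul_left_cancel₀ (hdpow_ne i hi) h6
      choose z hz using fun j => hFp_fixed (c j) (hfix j)
      refine ⟨z, ?_⟩
      apply Subtype.ext
      show ∑ j, ι (z j) • C j = m
      rw [hm1]
      exact Finset.sum_congr rfl fun j _ => by rw [hz j]
    exact ⟨(AddEquiv.ofBijective f ⟨hinj, hsurj⟩).symm⟩
end

section
/- Let D: {p-torsion finite locally free group schemes over O_{C_p}} → C be an exact contravariant functor to Frobenius modules over O_{C_p^♭} satisfying D(μ_p) = O(−1), D(ℤ/p) = O (trivial Frobenius module), and D(G^∨) ≅ D(G)^∨(−1). Suppose G sits in a short exact sequence 0 → μ_p → G → J → 0 with J finite locally free of rank p^{2g−1} whose étale part J^ét has rank p^e, and dim_{F_p} D(J)^{φ=1} = e (as holds when D(J)^{φ=1} ⊗ O_{C_p^♭} = D(J^ét)). Then for M = ∧²D(G): dim_{F_p} M^{φ=d} ≤ rank(M) − (2g − 1 − e). Equivalently, rank(∧²D(G)) − dim_{F_p}(∧²D(G))^{φ=d} ≥ 2g − 1 − e. -/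
set_option linter.unusedSectionVars false
set_option maxHeartbeats 1000000

open ExteriorAlgebra

section Aux
variable {O P Nv : Type} [CommRing O] [AddCommGroup Nv] [Module O Nv]
  [AddCommGroup P] [Module O P]


  [AddCommGroup P] [Module O P]

/-- Alternating map of two variables from a bilinear map vanishing on the diagonal. -/
def altOfBilin (B : Nv →ₗ[O] Nv →ₗ[O] P) (hB : ∀ x, B x x = 0) :
    Nv [⋀^Fin 2]→ₗ[O] P where
  toFun v := B (v 0) (v 1)
  map_update_add' v i x y := by
    fin_cases i <;>
      simp [Function.update_apply, Fin.ext_iff, map_add, LinearMap.add_apply]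
  map_update_smul' v i c x := by
    fin_cases i <;>
      simp [Function.update_apply, Fin.ext_iff, map_smul, LinearMap.smul_apply]
  map_eq_zero_of_eq' v i j hij hne := by
    have h01 : v 0 = v 1 := by
      fin_cases i <;> fin_cases j <;> simp_all [Fin.ext_iff]
    have : B (v 0) (v 1) = 0 := by rw [h01]; exact hB _
    simpa using this

@[simp] lemma altOfBilin_apply (B : Nv →ₗ[O] Nv →ₗ[O] P) (hB : ∀ x, B x x = 0) (x y : Nv) :
    altOfBilin B hB ![x, y] = B x y := rfl

/-- Lift a diagonal-vanishing bilinear map to the exterior algebra, killing all other degrees. -/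
noncomputable def lift2 (B : Nv →ₗ[O] Nv →ₗ[O] P) (hB : ∀ x, B x x = 0) :
    ExteriorAlgebra O Nv →ₗ[O] P :=
  liftAlternating (fun i => match i with
    | 2 => altOfBilin B hB
    | _ => 0)

@[simp] lemma lift2_ιMulti (B : Nv →ₗ[O] Nv →ₗ[O] P) (hB : ∀ x, B x x = 0) (x y : Nv) :
    lift2 B hB (ιMulti O 2 ![x, y]) = B x y := by
  rw [lift2, liftAlternating_apply_ιMulti]
  rfl


/-- The wedge of two vectors, as a bilinear map into the exterior algebra. -/
noncomputable def wedgeBL : Nv →ₗ[O] Nv →ₗ[O] ExteriorAlgebra O Nv :=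
  LinearMap.mk₂ O (fun x y => ι O x * ι O y)
    (fun x x' y => by simp [add_mul]) (fun c x y => by simp)
    (fun x y y' => by simp [mul_add]) (fun c x y => by simp)

lemma wedgeBL_apply (x y : Nv) : (wedgeBL x y : ExteriorAlgebra O Nv) = ι O x * ι O y := rfl

lemma ιMulti_two_eq (x y : Nv) : ιMulti O 2 ![x, y] = ι O x * ι O y := by
  rw [ιMulti_apply]
  simp [List.ofFn_succ]

lemma wedgeBL_mem (x y : Nv) : (wedgeBL x y : ExteriorAlgebra O Nv) ∈ ⋀[O]^2 Nv := by
  rw [wedgeBL_apply, ← ιMulti_two_eq]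
  exact ιMulti_range O 2 ⟨![x, y], rfl⟩

lemma wedgeBL_swap (x y : Nv) : (wedgeBL y x : ExteriorAlgebra O Nv) = - wedgeBL x y := by
  rw [wedgeBL_apply, wedgeBL_apply]
  exact eq_neg_of_add_eq_zero_left (by rw [add_comm]; exact ι_add_mul_swap x y)

lemma wedgeBL_self (x : Nv) : (wedgeBL x x : ExteriorAlgebra O Nv) = 0 := by
  rw [wedgeBL_apply]; exact ι_sq_zero x

lemma ιMulti_mem_span_wedges {ι' : Type} [Fintype ι'] (b : Module.Basis ι' O Nv) (v : Fin 2 → Nv) :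
    ιMulti O 2 v ∈ Submodule.span O (Set.range fun pr : ι' × ι' => (wedgeBL (b pr.1) (b pr.2) : ExteriorAlgebra O Nv)) := by
  have hv : ιMulti O 2 v = wedgeBL (v 0) (v 1) := by
    rw [wedgeBL_apply, ← ιMulti_two_eq]
    congr 1
    funext i
    fin_cases i <;> rfl
  rw [hv, ← b.sum_repr (v 0), ← b.sum_repr (v 1), map_sum]
  apply Submodule.sum_mem
  intro j _
  rw [map_smul]
  apply Submodule.smul_mem
  rw [map_sum, LinearMap.sum_apply]
  apply Submodule.sum_mem
  intro i _
  rw [map_smul, LinearMap.smul_apply]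
  apply Submodule.smul_mem
  exact Submodule.subset_span ⟨(i, j), rfl⟩

/-- The span of wedges of basis vectors is the whole second exterior power. -/
lemma span_wedge_basis {ι' : Type} [Fintype ι'] (b : Module.Basis ι' O Nv) :
    Submodule.span O (Set.range fun pr : ι' × ι' => (wedgeBL (b pr.1) (b pr.2) : ExteriorAlgebra O Nv))
      = ⋀[O]^2 Nv := by
  apply le_antisymm
  · rw [Submodule.span_le]
    rintro _ ⟨⟨i, j⟩, rfl⟩
    exact wedgeBL_mem _ _
  · rw [← ιMulti_span_fixedDegree, Submodule.span_le]
    rintro _ ⟨v, rfl⟩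
    exact ιMulti_mem_span_wedges b v

/-- The span of all decomposables is the whole second exterior power. -/
lemma span_wedges :
    Submodule.span O {z : ExteriorAlgebra O Nv | ∃ x y : Nv, z = wedgeBL x y} = ⋀[O]^2 Nv := by
  apply le_antisymm
  · rw [Submodule.span_le]
    rintro _ ⟨x, y, rfl⟩
    exact wedgeBL_mem _ _
  · rw [← ιMulti_span_fixedDegree, Submodule.span_le]
    rintro _ ⟨v, rfl⟩
    apply Submodule.subset_span
    refine ⟨v 0, v 1, ?_⟩
    rw [wedgeBL_apply, ← ιMulti_two_eq]
    congr 1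
    funext i
    fin_cases i <;> rfl
end Aux

section Tf
variable {O Nv : Type} [CommRing O] [IsDomain O] [AddCommGroup Nv] [Module O Nv]
variable {ι' : Type} [Fintype ι'] [DecidableEq ι'] (b : Module.Basis ι' O Nv)

/-- Coordinate bilinear form for the second exterior power. -/
noncomputable def coordBL (k l : ι') : Nv →ₗ[O] Nv →ₗ[O] O :=
  LinearMap.mk₂ O (fun x y => b.coord k x * b.coord l y - b.coord l x * b.coord k y)
    (fun x x' y => by simp; ring) (fun c x y => by simp; ring)
    (fun x y y' => by simp; ring) (fun c x y => by simp; ring)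

lemma coordBL_self (k l : ι') (x : Nv) : coordBL b k l x x = 0 := by
  simp [coordBL]; ring

/-- Coordinate functional on the exterior algebra. -/
noncomputable def coordExt (k l : ι') : ExteriorAlgebra O Nv →ₗ[O] O :=
  lift2 (coordBL b k l) (coordBL_self b k l)

lemma coordExt_wedge (k l : ι') (x y : Nv) :
    coordExt b k l (wedgeBL x y) = b.coord k x * b.coord l y - b.coord l x * b.coord k y := by
  have : (wedgeBL x y : ExteriorAlgebra O Nv) = ιMulti O 2 ![x, y] := by
    rw [wedgeBL_apply, ιMulti_two_eq]
  rw [this, coordExt, lift2_ιMulti]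
  rfl

lemma coordExt_wedge_basis (k l i j : ι') :
    coordExt b k l (wedgeBL (b i) (b j)) =
      (if i = k then 1 else 0) * (if j = l then 1 else 0)
        - (if i = l then 1 else 0) * (if j = k then 1 else 0) := by
  rw [coordExt_wedge]
  simp [Module.Basis.coord_apply, Module.Basis.repr_self_apply, Finsupp.single_apply]

lemma ext2_eq_zero_of_coords (z : ExteriorAlgebra O Nv) (hz : z ∈ ⋀[O]^2 Nv)
    (h : ∀ k l : ι', coordExt b k l z = 0) : z = 0 := by
  rw [← span_wedge_basis b] at hz
  rw [Submodule.mem_span_range_iff_exists_fun] at hz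
  obtain ⟨c, hc⟩ := hz
  have key : ∀ k l : ι', coordExt b k l z = c (k, l) - c (l, k) := by
    intro k l
    rw [← hc, map_sum]
    simp_rw [map_smul]
    rw [Fintype.sum_prod_type]
    simp_rw [coordExt_wedge_basis b]
    have single : ∀ k' l' : ι', (∑ x : ι', ∑ x1 : ι',
        c (x, x1) * ((if x = k' then (1:O) else 0) * (if x1 = l' then 1 else 0))) = c (k', l') := by
      intro k' l'
      rw [Finset.sum_eq_single k']
      · rw [Finset.sum_eq_single l']
        · simp
        · intro x _ hx; simp [hx]
        · simp
      · intro x _ hx; simp [hx]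
      · simp
    simp only [smul_eq_mul, mul_sub, Finset.sum_sub_distrib, single]
  have hsym : ∀ k l : ι', c (k, l) = c (l, k) := by
    intro k l
    have := key k l
    rw [h k l] at this
    exact sub_eq_zero.mp this.symm
  rw [← hc]
  apply Finset.sum_involution (fun pr _ => (pr.2, pr.1))
  · rintro ⟨i, j⟩ _
    dsimp only
    rw [wedgeBL_swap (b i) (b j), hsym j i]
    simp [smul_neg]
  · rintro ⟨i, j⟩ _ hfa hcon
    apply hfa
    have hd : j = i := by
      simpa using congrArg Prod.fst hcon
    subst hd
    simp [wedgeBL_self]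
  · intro a _; exact Finset.mem_univ _
  · intro a _; rfl

include b in
lemma ext2_noZeroSMulDivisors : NoZeroSMulDivisors O (⋀[O]^2 Nv) := by
  constructor
  intro a m h
  by_cases ha : a = 0
  · exact Or.inl ha
  · right
    have h1 : a • (m : ExteriorAlgebra O Nv) = 0 := by
      have := congrArg (Subtype.val) h
      simpa using this
    have : (m : ExteriorAlgebra O Nv) = 0 := by
      apply ext2_eq_zero_of_coords b _ m.2
      intro k l
      have h2 : a • coordExt b k l (m : ExteriorAlgebra O Nv) = 0 := by
        rw [← map_smul, h1, map_zero]
      rcases smul_eq_zero.mp h2 with h' | h'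
      · exact absurd h' ha
      · exact h'
    exact Subtype.ext (by simpa using this)

end Tf


/-- In a field of characteristic `p`, a solution of `t ^ p = t` lies in the prime field. -/
lemma pow_p_fixed_field {K : Type*} [Field K] (p : ℕ) [Fact p.Prime] [CharP K p] (t : K)
    (ht : t ^ p = t) : ∃ c : ZMod p, t = ZMod.castHom dvd_rfl K c := by
  classical
  by_contra hcon
  push_neg at hcon
  set f : Polynomial K := Polynomial.X ^ p - Polynomial.X with hf
  have hp2 : 2 ≤ p := (Fact.out : p.Prime).two_le
  have hdeg : f.natDegree = p := by
    rw [hf, Polynomial.natDegree_sub_eq_left_of_natDegree_lt] <;>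
      simp [Polynomial.natDegree_X_pow, Polynomial.natDegree_X]
    omega
  have hf0 : f ≠ 0 := by
    intro h
    rw [h] at hdeg
    simp at hdeg
    omega
  set ζ : ZMod p →+* K := ZMod.castHom dvd_rfl K with hζ
  have hζinj : Function.Injective ζ := ζ.injective
  set S : Finset K := insert t (Finset.image ζ Finset.univ) with hS
  have hroot : ∀ x ∈ S, x ∈ f.roots.toFinset := by
    intro x hx
    rw [Multiset.mem_toFinset, Polynomial.mem_roots hf0]
    rw [hS, Finset.mem_insert] at hx
    rcases hx with rfl | hx
    · simp [Polynomial.IsRoot, hf, ht]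
    · obtain ⟨c, _, rfl⟩ := Finset.mem_image.mp hx
      have : (ζ c) ^ p = ζ c := by
        rw [← map_pow, ZMod.pow_card]
      simp [Polynomial.IsRoot, hf, this]
  have hcard : S.card = p + 1 := by
    rw [hS, Finset.card_insert_of_notMem]
    · rw [Finset.card_image_of_injective _ hζinj]
      simp [ZMod.card]
    · intro hmem
      obtain ⟨c, _, hc⟩ := Finset.mem_image.mp hmem
      exact hcon c hc.symm
  have h1 : S.card ≤ f.roots.toFinset.card := Finset.card_le_card hroot
  have h2 : f.roots.toFinset.card ≤ Multiset.card f.roots := Multiset.toFinset_card_le _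
  have h3 : Multiset.card f.roots ≤ p := hdeg ▸ Polynomial.card_roots' f
  omega

/-- In a domain of characteristic `p`, if `a ^ p = b ^ (p - 1) * a` with `b ≠ 0`, then
`a` is an `𝔽_p`-multiple of `b`. -/
lemma ratio_in_Fp {O : Type*} [CommRing O] [IsDomain O] (p : ℕ) [Fact p.Prime]
    (hchar : CharP O p) {a b : O} (hb : b ≠ 0) (h : a ^ p = b ^ (p - 1) * a) :
    ∃ c : ZMod p, a = ((c.val : ℕ) : O) * b := by
  classical
  have hp1 : 1 ≤ p := (Fact.out : p.Prime).one_le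
  set K := FractionRing O
  have hinj : Function.Injective (algebraMap O K) := IsFractionRing.injective O K
  haveI : CharP K p := charP_of_injective_ringHom hinj p
  set i : O →+* K := algebraMap O K with hi
  have hib : i b ≠ 0 := fun hzero => hb (hinj (by simpa using hzero))
  have hcross : a ^ p * b = a * b ^ p := by
    rw [h]
    have : b ^ (p - 1) * b = b ^ p := by
      rw [← pow_succ]
      congr 1
      omega
    rw [mul_assoc, mul_comm a b, ← mul_assoc, this, mul_comm]
  have ht : (i a / i b) ^ p = i a / i b := by
    rw [div_pow, div_eq_div_iff (pow_ne_zero _ hib) hib]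
    rw [← map_pow, ← map_pow, ← map_mul, ← map_mul, hcross]
  obtain ⟨c, hc⟩ := pow_p_fixed_field p (i a / i b) ht
  refine ⟨c, hinj ?_⟩
  have hval : (ZMod.castHom dvd_rfl K) c = ((c.val : ℕ) : K) := by
    haveI : NeZero p := ⟨by omega⟩
    rw [ZMod.castHom_apply, ← ZMod.natCast_val]
  rw [div_eq_iff hib] at hc
  rw [map_mul, hc, hval, map_natCast i]

/-- Artin's independence of Frobenius-fixed-up-to-`d` vectors: an `𝔽_p`-independent
family of solutions of `φ x = d • x` is `O`-linearly independent. -/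
lemma artin_independent {O : Type*} [CommRing O] [IsDomain O] {p : ℕ} [Fact p.Prime]
    (hchar : CharP O p) {V : Type*} [AddCommGroup V] [Module O V] [NoZeroSMulDivisors O V]
    (d : O) (hd : d ≠ 0) (φ : V →+ V) (hsmul : ∀ (a : O) (x : V), φ (a • x) = a ^ p • φ x)
    {k : ℕ} (m : Fin k → V) (hfix : ∀ i, φ (m i) = d • m i)
    (hindep : ∀ c : Fin k → ZMod p, ∑ i, ((c i).val : O) • m i = 0 → c = 0) :
    LinearIndependent O m := by
  classical
  rw [Fintype.linearIndependent_iff]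
  suffices H : ∀ (t : Finset (Fin k)) (a : Fin k → O), (∀ i, a i ≠ 0 → i ∈ t) →
      ∑ i, a i • m i = 0 → ∀ i, a i = 0 by
    intro a hsum
    exact H Finset.univ a (fun i _ => Finset.mem_univ i) hsum
  intro t
  induction t using Finset.strongInduction with
  | _ t ih =>
    intro a ha hsum0
    by_contra hcon
    push_neg at hcon
    obtain ⟨j, hj⟩ := hcon
    have hjt : j ∈ t := ha j hj
    -- apply φ to the relation
    have S1 : ∑ i, (a i ^ p) • m i = 0 := by
      have h0 : φ (∑ i, a i • m i) = 0 := by rw [hsum0, map_zero]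
      rw [map_sum] at h0
      simp_rw [hsmul, hfix] at h0
      have : d • ∑ i, (a i ^ p) • m i = 0 := by
        rw [Finset.smul_sum]
        rw [← h0]
        apply Finset.sum_congr rfl
        intro i _
        rw [smul_comm]
      rcases smul_eq_zero.mp this with h' | h'
      · exact absurd h' hd
      · exact h'
    have S2 : ∑ i, (a j ^ (p - 1) * a i) • m i = 0 := by
      have : a j ^ (p - 1) • ∑ i, a i • m i = 0 := by rw [hsum0, smul_zero]
      rw [Finset.smul_sum] at this
      simpa [smul_smul] using this
    set a' : Fin k → O := fun i => a i ^ p - a j ^ (p - 1) * a i with ha'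
    have hsum' : ∑ i, a' i • m i = 0 := by
      simp_rw [ha', sub_smul]
      rw [Finset.sum_sub_distrib, S1, S2, sub_zero]
    have ha'j : a' j = 0 := by
      rw [ha']
      have : a j ^ (p - 1) * a j = a j ^ p := by
        rw [← pow_succ]
        congr 1
        have := (Fact.out : p.Prime).one_le
        omega
      simp [this]
    have hsupp : ∀ i, a' i ≠ 0 → i ∈ t.erase j := by
      intro i hi
      rw [Finset.mem_erase]
      constructor
      · intro hij; exact hi (hij ▸ ha'j)
      · apply ha
        intro hia
        apply hi
        have hp0 : p ≠ 0 := (Fact.out : p.Prime).ne_zero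
        simp [ha', hia, zero_pow hp0]
    have hall : ∀ i, a' i = 0 :=
      ih (t.erase j) (Finset.erase_ssubset hjt) a' hsupp hsum'
    -- each a i is an 𝔽_p multiple of a j
    have hrel : ∀ i, a i ^ p = a j ^ (p - 1) * a i := by
      intro i
      have h5 := hall i
      simp only [ha'] at h5
      exact sub_eq_zero.mp h5
    have hc : ∀ i, ∃ c : ZMod p, a i = ((c.val : ℕ) : O) * a j := by
      intro i
      exact ratio_in_Fp p hchar hj (hrel i)
    choose c hcc using hc
    have : a j • ∑ i, ((c i).val : O) • m i = 0 := by
      rw [Finset.smul_sum]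
      rw [← hsum0]
      apply Finset.sum_congr rfl
      intro i _
      rw [smul_smul, mul_comm, ← hcc i]
    rcases smul_eq_zero.mp this with h' | h'
    · exact hj h'
    · have hczero := hindep c h'
      apply hj
      rw [hcc j, hczero]
      simp


section MainAux

variable {O : Type} [CommRing O] [IsDomain O] {Nv : Type} [AddCommGroup Nv] [Module O Nv]

/-- Evaluation of `lift2` on a wedge. -/
lemma lift2_wedge {P : Type} [AddCommGroup P] [Module O P]
    (B : Nv →ₗ[O] Nv →ₗ[O] P) (hB : ∀ x, B x x = 0) (x y : Nv) :
    lift2 B hB (wedgeBL x y) = B x y := by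
  have : (wedgeBL x y : ExteriorAlgebra O Nv) = ιMulti O 2 ![x, y] := by
    rw [wedgeBL_apply, ιMulti_two_eq]
  rw [this, lift2_ιMulti]

/-- The set of decomposable elements spans the second exterior power (subtype version). -/
lemma span_wedges_subtype :
    Submodule.span O {m : ⋀[O]^2 Nv | ∃ x y : Nv, (m : ExteriorAlgebra O Nv) = wedgeBL x y} = ⊤ := by
  apply Submodule.map_injective_of_injective (Submodule.injective_subtype (⋀[O]^2 Nv))
  have himg : (⋀[O]^2 Nv).subtype '' {m : ⋀[O]^2 Nv | ∃ x y : Nv, (m : ExteriorAlgebra O Nv) = wedgeBL x y}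
      = {z : ExteriorAlgebra O Nv | ∃ x y : Nv, z = wedgeBL x y} := by
    ext z
    constructor
    · rintro ⟨⟨w, hw⟩, ⟨x, y, h⟩, rfl⟩
      exact ⟨x, y, h⟩
    · rintro ⟨x, y, rfl⟩
      exact ⟨⟨wedgeBL x y, wedgeBL_mem x y⟩, ⟨x, y, rfl⟩, rfl⟩
  rw [Submodule.map_span, Submodule.map_top, Submodule.range_subtype, himg, span_wedges]

/-- The basis wedges span the second exterior power (subtype version). -/
lemma span_wedge_basis_subtype {ι' : Type} [Fintype ι'] (b : Module.Basis ι' O Nv) :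
    Submodule.span O (Set.range fun pr : ι' × ι' =>
      (⟨wedgeBL (b pr.1) (b pr.2), wedgeBL_mem _ _⟩ : ⋀[O]^2 Nv)) = ⊤ := by
  apply Submodule.map_injective_of_injective (Submodule.injective_subtype (⋀[O]^2 Nv))
  have himg : (⋀[O]^2 Nv).subtype '' (Set.range fun pr : ι' × ι' =>
        (⟨wedgeBL (b pr.1) (b pr.2), wedgeBL_mem _ _⟩ : ⋀[O]^2 Nv))
      = Set.range fun pr : ι' × ι' => (wedgeBL (b pr.1) (b pr.2) : ExteriorAlgebra O Nv) := by
    ext z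
    constructor
    · rintro ⟨_, ⟨pr, rfl⟩, rfl⟩
      exact ⟨pr, rfl⟩
    · rintro ⟨pr, rfl⟩
      exact ⟨⟨wedgeBL (b pr.1) (b pr.2), wedgeBL_mem _ _⟩, ⟨pr, rfl⟩, rfl⟩
  rw [Submodule.map_span, Submodule.map_top, Submodule.range_subtype, himg, span_wedge_basis b]

lemma ext2_finite {ι' : Type} [Fintype ι'] (b : Module.Basis ι' O Nv) :
    Module.Finite O (⋀[O]^2 Nv) := by
  classical
  rw [Module.finite_def]
  refine ⟨Finset.univ.image (fun pr : ι' × ι' =>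
    (⟨wedgeBL (b pr.1) (b pr.2), wedgeBL_mem _ _⟩ : ⋀[O]^2 Nv)), ?_⟩
  rw [Finset.coe_image, Finset.coe_univ, Set.image_univ, span_wedge_basis_subtype b]

end MainAux


/-- the abstract prismatic-Dieudonné bound for abelian varieties of
positive p-rank.  Via the (mod-p prismatic) Dieudonné functor `D`, the short exact
sequence `0 → μ_p → G → J → 0` (with `G = 𝒳[p]` of height `2g` and `J` of height
`2g-1` with étale part of rank `e`) yields, over the tilt `O = O_{C_p^♭}` (char-`p`
domain with divisible-ℚ-valued valuation `dpow` and `p`-power Frobenius `φR`):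
a finite free module `N = D(G)` of rank `2g` with semilinear Frobenius `φN`
(an isomorphism after inverting `d`), a Frobenius-stable free submodule `W = D(J)` of
rank `2g-1`, and a Frobenius-equivariant surjection `q : N → O(-1) = D(μ_p)` with
kernel `W` (i.e. `q (φN x) = d·φR (q x)`); moreover `dim_{F_p} D(J)^{φ=1} = e`.
Then for `M = ∧²D(G)` with its induced Frobenius `φ2` (`φ2 (x∧y) = φN x ∧ φN y`):
`dim_{F_p} M^{φ2 = d} ≤ rank M - (2g - 1 - e)`. -/
theorem stmt15
    {p : ℕ} [Fact p.Prime]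
    {O : Type} [CommRing O] [IsDomain O]
    (hchar : (p : O) = 0)
    (dpow : ℚ → O)
    (hdpow_zero : dpow 0 = 1)
    (hdpow_add : ∀ a b : ℚ, 0 ≤ a → 0 ≤ b → dpow (a + b) = dpow a * dpow b)
    (hdpow_ne : ∀ a : ℚ, 0 ≤ a → dpow a ≠ 0)
    (hdpow_unit : ∀ a : ℚ, 0 ≤ a → (IsUnit (dpow a) ↔ a = 0))
    (hval : ∀ r : O, r ≠ 0 → ∃ a : ℚ, 0 ≤ a ∧ ∃ u : Oˣ, r = dpow a * (u : O))
    (φR : O →+* O)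
    (hφR_pow : ∀ y : O, φR y = y ^ p)
    (g e : ℕ) (hg : 1 ≤ g) (he : 0 < e)
    -- N = D(G), free of rank 2g, with Frobenius an isomorphism after inverting d
    {N : Type} [AddCommGroup N] [Module O N] [Module.Free O N] [Module.Finite O N]
    (hrankN : Module.finrank O N = 2 * g)
    (φN : N →ₛₗ[φR] N)
    (hφN_inj : Function.Injective φN)
    (hφN_cok : ∀ y : N, ∃ (n : ℚ) (x : N), 0 ≤ n ∧ dpow n • y = φN x)
    -- W = D(J) ⊆ N, Frobenius-stable, free of rank 2g - 1
    (W : Submodule O N) [Module.Free O W]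
    (hWstable : ∀ x ∈ W, φN x ∈ W)
    (hrankW : Module.finrank O W = 2 * g - 1)
    -- N/W ≅ O(-1) = D(μ_p), via a Frobenius-equivariant surjection q with kernel W
    (q : N →ₗ[O] O) (hq_surj : Function.Surjective q) (hq_ker : LinearMap.ker q = W)
    (hq_frob : ∀ x : N, q (φN x) = dpow 1 * φR (q x))
    -- dim_{F_p} D(J)^{φ=1} = e (as holds when D(J)^{φ=1} ⊗ O = D(J^ét))
    (hWfix : Nonempty
      ((W.toAddSubgroup ⊓ (φN.toAddMonoidHom - AddMonoidHom.id N).ker : AddSubgroup N)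
        ≃+ (Fin e → ZMod p)))
    -- M = ∧²D(G) with its induced semilinear Frobenius φ2
    (φ2 : (⋀[O]^2 N) →ₛₗ[φR] (⋀[O]^2 N))
    (hφ2 : ∀ x y : N,
      (φ2 ⟨ExteriorAlgebra.ιMulti O 2 ![x, y],
            ExteriorAlgebra.ιMulti_range O 2 ⟨![x, y], rfl⟩⟩ : ExteriorAlgebra O N)
        = ExteriorAlgebra.ιMulti O 2 ![φN x, φN y]) :
    -- conclusion: dim_{F_p} (∧²D(G))^{φ=d} ≤ rank ∧²D(G) - (2g - 1 - e)
    ∀ (n : ℕ) (f : (Fin n → ZMod p) →+ (⋀[O]^2 N)),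
      Function.Injective f → (∀ v, φ2 (f v) = dpow 1 • f v) →
      (n : ℤ) + (2 * (g : ℤ) - 1 - (e : ℤ)) ≤ (Module.finrank O (⋀[O]^2 N) : ℤ) := by
  intro n f hf_inj hf_fix
  classical
  have hp : p.Prime := Fact.out
  haveI : NeZero p := ⟨hp.ne_zero⟩
  set d : O := dpow 1 with hd_def
  have hd : d ≠ 0 := hdpow_ne 1 (by norm_num)
  -- characteristic p
  have hcharO : CharP O p := by
    have hdvd : ringChar O ∣ p := ringChar.dvd hchar
    rcases (hp.eq_one_or_self_of_dvd _ hdvd) with h1 | h1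
    · exact absurd h1 (CharP.char_ne_one O (ringChar O))
    · rw [← h1]; exact ringChar.charP O
  -- the contraction map Qa : ExteriorAlgebra → N
  set BQ : N →ₗ[O] N →ₗ[O] N := LinearMap.mk₂ O (fun x y => q x • y - q y • x)
    (fun x x' y => by simp [add_smul, smul_add] <;> abel)
    (fun c x y => by simp [smul_smul, smul_sub, mul_comm] <;> abel)
    (fun x y y' => by simp [add_smul, smul_add] <;> abel)
    (fun c x y => by simp [smul_smul, smul_sub, mul_comm] <;> abel) with hBQ_def
  have hBQ_apply : ∀ x y : N, BQ x y = q x • y - q y • x := fun x y => rfl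
  have hBQ : ∀ x : N, BQ x x = 0 := fun x => by rw [hBQ_apply, sub_self]
  set Qa : ExteriorAlgebra O N →ₗ[O] N := lift2 BQ hBQ with hQa_def
  have hQa_wedge : ∀ x y : N, Qa (wedgeBL x y) = q x • y - q y • x := by
    intro x y; rw [hQa_def, lift2_wedge, hBQ_apply]
  -- φ2 on wedges
  have hφ2' : ∀ (m : ⋀[O]^2 N) (x y : N), (m : ExteriorAlgebra O N) = wedgeBL x y →
      (φ2 m : ExteriorAlgebra O N) = wedgeBL (φN x) (φN y) := by
    intro m x y hm
    have hmeq : m = ⟨ExteriorAlgebra.ιMulti O 2 ![x, y],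
        ExteriorAlgebra.ιMulti_range O 2 ⟨![x, y], rfl⟩⟩ := by
      apply Subtype.ext
      rw [hm, wedgeBL_apply, ← ιMulti_two_eq]
    rw [hmeq, hφ2 x y, wedgeBL_apply, ← ιMulti_two_eq]
  -- key Frobenius-equivariance of the contraction
  have key : ∀ m : ⋀[O]^2 N,
      Qa (φ2 m : ExteriorAlgebra O N) = d • φN (Qa (m : ExteriorAlgebra O N)) := by
    intro m
    have hm : m ∈ Submodule.span O
        {m : ⋀[O]^2 N | ∃ x y : N, (m : ExteriorAlgebra O N) = wedgeBL x y} := by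
      rw [span_wedges_subtype]; trivial
    induction hm using Submodule.span_induction with
    | mem x hx =>
      obtain ⟨a, b', hab⟩ := hx
      rw [hφ2' x a b' hab, hab, hQa_wedge, hQa_wedge]
      rw [hq_frob, hq_frob]
      rw [map_sub, LinearMap.map_smulₛₗ, LinearMap.map_smulₛₗ]
      rw [smul_sub, mul_smul, mul_smul]
    | zero => simp
    | add x y hx hy ihx ihy =>
      rw [map_add, Submodule.coe_add, map_add, Submodule.coe_add, map_add, map_add, ihx, ihy,
        smul_add]
    | smul a x hx ihx =>
      have c1 : ((a • x : ⋀[O]^2 N) : ExteriorAlgebra O N) = a • (x : ExteriorAlgebra O N) := rfl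
      have c2 : φ2 (a • x) = φR a • φ2 x := LinearMap.map_smulₛₗ φ2 a x
      have c3 : φN (Qa (a • (x : ExteriorAlgebra O N))) = φR a • φN (Qa (x : ExteriorAlgebra O N)) := by
        rw [map_smul, LinearMap.map_smulₛₗ]
      rw [c2, Submodule.coe_smul, map_smul, ihx, c1, c3, smul_comm]
  -- the contraction lands in W
  have hQaW : ∀ z ∈ ⋀[O]^2 N, Qa z ∈ W := by
    intro z hz
    rw [← hq_ker, LinearMap.mem_ker]
    rw [← span_wedges] at hz
    induction hz using Submodule.span_induction with
    | mem x hx =>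
      obtain ⟨a, b', rfl⟩ := hx
      rw [hQa_wedge, map_sub, map_smul, map_smul, smul_eq_mul, smul_eq_mul, mul_comm, sub_self]
    | zero => simp
    | add x y hx hy ihx ihy => rw [map_add, map_add, ihx, ihy, add_zero]
    | smul a x hx ihx => rw [map_smul, map_smul, ihx, smul_zero]
  -- instances on the exterior square
  set bN : Module.Basis (Fin (Module.finrank O N)) O N := Module.finBasis O N with hbN_def
  haveI hNZ2 : NoZeroSMulDivisors O (⋀[O]^2 N) := ext2_noZeroSMulDivisors bN
  haveI hFin2 : Module.Finite O (⋀[O]^2 N) := ext2_finite bN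
  -- W is finite free of rank 2g-1
  have hrankWle : Module.rank O W < Cardinal.aleph0 := by
    have h1 : Module.rank O W ≤ Module.rank O N := Submodule.rank_le W
    have h2 : Module.rank O N = (2 * g : ℕ) := by
      rw [← hrankN, Module.finrank_eq_rank O N]
    rw [h2] at h1
    exact lt_of_le_of_lt h1 (Cardinal.nat_lt_aleph0 _)
  obtain ⟨nW, hnW⟩ := Cardinal.lt_aleph0.mp hrankWle
  haveI hWfin : Module.Finite O W := Module.finite_of_rank_eq_nat hnW
  set bW : Module.Basis (Fin (Module.finrank O W)) O W := Module.finBasis O W with hbW_def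
  set wfam : Fin (Module.finrank O W) → N := fun j => ((bW j : W) : N) with hwfam_def
  have hwfam_mem : ∀ j, wfam j ∈ W := fun j => (bW j).2
  have hwfam_li : LinearIndependent O wfam := by
    have := bW.linearIndependent
    exact this.map' W.subtype (Submodule.ker_subtype W)
  -- the fixed subgroup
  obtain ⟨E⟩ := hWfix
  -- the map v ↦ Qa (f v) lands in the fixed subgroup
  have hfvW : ∀ v, Qa ((f v : ⋀[O]^2 N) : ExteriorAlgebra O N) ∈ W :=
    fun v => hQaW _ (f v).2
  have hfv_fix : ∀ v, φN (Qa ((f v : ⋀[O]^2 N) : ExteriorAlgebra O N))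
      = Qa ((f v : ⋀[O]^2 N) : ExteriorAlgebra O N) := by
    intro v
    have h1 := key (f v)
    rw [hf_fix v] at h1
    have h2 : Qa ((d • f v : ⋀[O]^2 N) : ExteriorAlgebra O N)
        = d • Qa ((f v : ⋀[O]^2 N) : ExteriorAlgebra O N) := by
      rw [Submodule.coe_smul, map_smul]
    rw [h2] at h1
    have h3 : d • (φN (Qa ((f v : ⋀[O]^2 N) : ExteriorAlgebra O N))
        - Qa ((f v : ⋀[O]^2 N) : ExteriorAlgebra O N)) = 0 := by
      rw [smul_sub, ← h1, sub_self]
    rcases smul_eq_zero.mp h3 with h' | h'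
    · exact absurd h' hd
    · rw [sub_eq_zero] at h'
      exact h'
  have hfvG : ∀ v, Qa ((f v : ⋀[O]^2 N) : ExteriorAlgebra O N) ∈
      (W.toAddSubgroup ⊓ (φN.toAddMonoidHom - AddMonoidHom.id N).ker : AddSubgroup N) := by
    intro v
    refine AddSubgroup.mem_inf.mpr ⟨?_, ?_⟩
    · exact hfvW v
    · rw [AddMonoidHom.mem_ker, AddMonoidHom.sub_apply]
      simp only [LinearMap.toAddMonoidHom_coe, AddMonoidHom.id_apply]
      rw [hfv_fix v, sub_self]
  -- bundle into a ZMod p-linear map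
  set G₀ := (W.toAddSubgroup ⊓ (φN.toAddMonoidHom - AddMonoidHom.id N).ker : AddSubgroup N)
    with hG₀_def
  set Qplus : (Fin n → ZMod p) →+ (Fin e → ZMod p) :=
    { toFun := fun v => E ⟨Qa ((f v : ⋀[O]^2 N) : ExteriorAlgebra O N), hfvG v⟩
      map_zero' := by
        show E ⟨Qa ((f 0 : ⋀[O]^2 N) : ExteriorAlgebra O N), hfvG 0⟩ = 0
        have : (⟨Qa ((f 0 : ⋀[O]^2 N) : ExteriorAlgebra O N), hfvG 0⟩ : G₀) = 0 := by
          ext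
          simp [map_zero]
        rw [this, map_zero]
      map_add' := by
        intro v w
        show E ⟨Qa ((f (v + w) : ⋀[O]^2 N) : ExteriorAlgebra O N), hfvG (v + w)⟩
            = E ⟨Qa ((f v : ⋀[O]^2 N) : ExteriorAlgebra O N), hfvG v⟩
              + E ⟨Qa ((f w : ⋀[O]^2 N) : ExteriorAlgebra O N), hfvG w⟩
        have : (⟨Qa ((f (v + w) : ⋀[O]^2 N) : ExteriorAlgebra O N), hfvG (v + w)⟩ : G₀)
            = ⟨Qa ((f v : ⋀[O]^2 N) : ExteriorAlgebra O N), hfvG v⟩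
              + ⟨Qa ((f w : ⋀[O]^2 N) : ExteriorAlgebra O N), hfvG w⟩ := by
          ext
          simp [map_add]
        rw [this, map_add] } with hQplus_def
  have hQplus_apply : ∀ v, Qplus v = E ⟨Qa ((f v : ⋀[O]^2 N) : ExteriorAlgebra O N), hfvG v⟩ :=
    fun v => rfl
  have hzmod_smul : ∀ {A : Type} [AddCommGroup A] [Module (ZMod p) A] (c : ZMod p) (x : A),
      c • x = c.val • x := by
    intro A _ _ c x
    rw [← Nat.cast_smul_eq_nsmul (ZMod p) c.val x, ZMod.natCast_val, ZMod.cast_id]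
  set Qlin : (Fin n → ZMod p) →ₗ[ZMod p] (Fin e → ZMod p) :=
    { toFun := Qplus
      map_add' := Qplus.map_add
      map_smul' := by
        intro c v
        simp only [RingHom.id_apply]
        rw [hzmod_smul c v, AddMonoidHom.map_nsmul, hzmod_smul c (Qplus v)] } with hQlin_def
  have hQlin_apply : ∀ v, Qlin v = Qplus v := fun v => rfl
  -- rank-nullity over ZMod p
  set kk : ℕ := Module.finrank (ZMod p) (LinearMap.ker Qlin) with hkk_def
  have hnk : n ≤ kk + e := by
    have h1 := LinearMap.finrank_range_add_finrank_ker Qlin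
    have h2 : Module.finrank (ZMod p) (Fin n → ZMod p) = n := by
      rw [Module.finrank_pi]; simp
    have h3 : Module.finrank (ZMod p) (LinearMap.range Qlin) ≤ e := by
      have h4 := Submodule.finrank_le (LinearMap.range Qlin)
      have h5 : Module.finrank (ZMod p) (Fin e → ZMod p) = e := by
        rw [Module.finrank_pi]; simp
      omega
    omega
  -- basis of the kernel, mapped into the exterior square
  set bK : Module.Basis (Fin kk) (ZMod p) (LinearMap.ker Qlin) :=
    Module.finBasis (ZMod p) (LinearMap.ker Qlin) with hbK_def
  set mvec : Fin kk → (⋀[O]^2 N) := fun i => f ((bK i : Fin n → ZMod p)) with hmvec_def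
  have hmvec_ker : ∀ i, Qa ((mvec i : ⋀[O]^2 N) : ExteriorAlgebra O N) = 0 := by
    intro i
    have h1 : Qlin (bK i : Fin n → ZMod p) = 0 := (bK i).2
    rw [hQlin_apply, hQplus_apply] at h1
    have h2 : (⟨Qa ((f (bK i : Fin n → ZMod p) : ⋀[O]^2 N) : ExteriorAlgebra O N),
        hfvG _⟩ : G₀) = 0 := by
      exact (AddEquiv.map_eq_zero_iff E).mp h1
    have h3 := congrArg (fun x : G₀ => (x : N)) h2
    simpa [hmvec_def] using h3
  -- Artin independence of mvec
  have hmvec_li : LinearIndependent O mvec := by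
    apply artin_independent hcharO d hd φ2.toAddMonoidHom
    · intro a x
      simp only [LinearMap.toAddMonoidHom_coe]
      rw [LinearMap.map_smulₛₗ, hφR_pow]
    · intro i
      simp only [LinearMap.toAddMonoidHom_coe]
      exact hf_fix _
    · intro c hc
      have h1 : ∀ i, ((c i).val : O) • mvec i = (c i).val • mvec i := by
        intro i
        rw [Nat.cast_smul_eq_nsmul]
      rw [Finset.sum_congr rfl (fun i _ => h1 i)] at hc
      have h2 : f (∑ i, (c i).val • (bK i : Fin n → ZMod p)) = 0 := by
        rw [map_sum]
        rw [← hc]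
        apply Finset.sum_congr rfl
        intro i _
        rw [AddMonoidHom.map_nsmul]
      have h3 : (∑ i, (c i).val • (bK i : Fin n → ZMod p)) = 0 := by
        apply hf_inj
        rw [h2, map_zero]
      have h4 : (∑ i, c i • (bK i : Fin n → ZMod p)) = 0 := by
        rw [← h3]
        apply Finset.sum_congr rfl
        intro i _
        rw [hzmod_smul]
      have h5 : ((∑ i, c i • bK i : LinearMap.ker Qlin) : Fin n → ZMod p) = 0 := by
        push_cast
        exact h4
      have h6 : (∑ i, c i • bK i : LinearMap.ker Qlin) = 0 := by
        exact Subtype.ext h5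
      have h7 := Fintype.linearIndependent_iff.mp bK.linearIndependent c h6
      funext i
      exact h7 i
  -- the complementary family
  obtain ⟨x₀, hx₀⟩ := hq_surj 1
  set ufam : Fin (Module.finrank O W) → (⋀[O]^2 N) :=
    fun j => ⟨wedgeBL x₀ (wfam j), wedgeBL_mem _ _⟩ with hufam_def
  have hQu : ∀ j, Qa ((ufam j : ⋀[O]^2 N) : ExteriorAlgebra O N) = wfam j := by
    intro j
    have h1 : q (wfam j) = 0 := by
      rw [← LinearMap.mem_ker, hq_ker]
      exact hwfam_mem j
    simp only [hufam_def]
    rw [hQa_wedge, hx₀, h1, one_smul, zero_smul, sub_zero]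
  -- the combined family is linearly independent
  set vfam : (Fin kk ⊕ Fin (Module.finrank O W)) → (⋀[O]^2 N) := Sum.elim mvec ufam
    with hvfam_def
  have hvfam_li : LinearIndependent O vfam := by
    rw [Fintype.linearIndependent_iff]
    intro aa hs
    set Qc : (⋀[O]^2 N) →ₗ[O] N := Qa.comp (Submodule.subtype _) with hQc_def
    have hQc_apply : ∀ m : ⋀[O]^2 N, Qc m = Qa (m : ExteriorAlgebra O N) := fun m => rfl
    have h0 : Qc (∑ i, aa i • vfam i) = 0 := by rw [hs, map_zero]
    rw [map_sum] at h0
    simp_rw [map_smul] at h0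
    rw [Fintype.sum_sum_type] at h0
    have hleft : ∀ i, Qc (vfam (Sum.inl i)) = 0 := by
      intro i
      rw [hvfam_def]
      simp only [Sum.elim_inl]
      rw [hQc_apply, hmvec_ker]
    have hright : ∀ j, Qc (vfam (Sum.inr j)) = wfam j := by
      intro j
      rw [hvfam_def]
      simp only [Sum.elim_inr]
      rw [hQc_apply, hQu]
    simp_rw [hleft, hright, smul_zero] at h0
    rw [Finset.sum_const_zero, zero_add] at h0
    have hr0 : ∀ j, aa (Sum.inr j) = 0 :=
      Fintype.linearIndependent_iff.mp hwfam_li _ h0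
    have hs' : ∑ i, aa (Sum.inl i) • mvec i = 0 := by
      rw [Fintype.sum_sum_type] at hs
      have : ∑ j, aa (Sum.inr j) • vfam (Sum.inr j) = 0 := by
        apply Finset.sum_eq_zero
        intro j _
        rw [hr0 j, zero_smul]
      rw [this, add_zero] at hs
      rw [← hs]
      apply Finset.sum_congr rfl
      intro i _
      simp [hvfam_def]
    have hl0 : ∀ i, aa (Sum.inl i) = 0 :=
      Fintype.linearIndependent_iff.mp hmvec_li _ hs'
    intro i
    cases i with
    | inl i => exact hl0 i
    | inr j => exact hr0 j
  -- count
  have hcount : kk + Module.finrank O W ≤ Module.finrank O (⋀[O]^2 N) := by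
    have := hvfam_li.fintype_card_le_finrank
    simpa using this
  have hwZ : (Module.finrank O W : ℤ) = 2 * (g : ℤ) - 1 := by
    rw [hrankW]
    push_cast [Nat.cast_sub (by omega : 1 ≤ 2 * g)]
    ring
  have hcountZ : (kk : ℤ) + (2 * (g : ℤ) - 1) ≤ (Module.finrank O (⋀[O]^2 N) : ℤ) := by
    rw [← hwZ]
    exact_mod_cast hcount
  have hnkZ : (n : ℤ) ≤ (kk : ℤ) + (e : ℤ) := by exact_mod_cast hnk
  linarith
end

section
/- Let 0 → A → M → B → 0 be a short exact sequence of finite free O_{C_p^♭}-modules with Frobenius-semilinear maps φ commuting with the maps of the sequence, each φ an isomorphism after inverting d. Then for every i ∈ ℚ_{≥0}, dim_{F_p} M^{φ = d^i} ≤ dim_{F_p} A^{φ = d^i} + dim_{F_p} B^{φ = d^i}, and each of these fixed spaces is a finite-dimensional F_p-vector space of dimension at most the rank of the corresponding module. -/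
open Polynomial

section Aux
variable {p : ℕ} [Fact p.Prime]

private lemma charO {O : Type*} [NonAssocSemiring O] [Nontrivial O] (hchar : (p : O) = 0) :
    CharP O p := by
  have hd : ringChar O ∣ p := ringChar.dvd hchar
  rcases (Fact.out : p.Prime).eq_one_or_self_of_dvd _ hd with h | h
  · exact absurd h CharP.ringChar_ne_one
  · exact ringChar.of_eq h

private lemma exists_zmod_of_pow_eq {F : Type*} [Field F] [CharP F p]
    {u : F} (hu : u ^ p = u) : ∃ l : ZMod p, u = ((l.val : ℕ) : F) := by
  classical
  by_contra hcon
  push_neg at hcon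
  have hp1 : 1 < p := (Fact.out : p.Prime).one_lt
  have hfne : (X ^ p - X : F[X]) ≠ 0 := FiniteField.X_pow_card_sub_X_ne_zero F hp1
  have hdeg : (X ^ p - X : F[X]).natDegree = p := FiniteField.X_pow_card_sub_X_natDegree_eq F hp1
  have hinj : Function.Injective (fun l : ZMod p => ((l.val : ℕ) : F)) := by
    intro a b hab
    apply ZMod.castHom_injective F (n := p)
    simpa [ZMod.natCast_val] using hab
  set s : Finset F := Finset.image (fun l : ZMod p => ((l.val : ℕ) : F)) Finset.univ with hs
  have hscard : s.card = p := by
    rw [hs, Finset.card_image_of_injective _ hinj, Finset.card_univ, ZMod.card]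
  have hroot : ∀ x ∈ insert u s, x ∈ (X ^ p - X : F[X]).roots.toFinset := by
    intro x hx
    rw [Multiset.mem_toFinset, Polynomial.mem_roots hfne]
    rcases Finset.mem_insert.mp hx with h | h
    · subst h
      simp [Polynomial.IsRoot, hu]
    · rw [hs] at h
      obtain ⟨l, _, rfl⟩ := Finset.mem_image.mp h
      have : ((l.val : ℕ) : F) ^ p = ((l.val : ℕ) : F) := by
        have h1 : ((l.val : ℕ) : F) = ZMod.castHom (dvd_refl p) F l := by
          simp [ZMod.natCast_val]
        rw [h1, ← map_pow, ZMod.pow_card]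
      simpa [Polynomial.IsRoot, sub_eq_zero, ZMod.natCast_val] using this
  have hcard : (insert u s).card ≤ (X ^ p - X : F[X]).roots.toFinset.card :=
    Finset.card_le_card fun x hx => hroot x hx
  have : p + 1 ≤ p := by
    calc p + 1 = (insert u s).card := by
          rw [Finset.card_insert_of_notMem (by
            intro hmem
            rw [hs] at hmem
            obtain ⟨l, _, hl⟩ := Finset.mem_image.mp hmem
            exact hcon l hl.symm), hscard]
      _ ≤ (X ^ p - X : F[X]).roots.toFinset.card := hcard
      _ ≤ Multiset.card (X ^ p - X : F[X]).roots := (X ^ p - X : F[X]).roots.toFinset_card_le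
      _ ≤ (X ^ p - X : F[X]).natDegree := Polynomial.card_roots' _
      _ = p := hdeg
  omega

private lemma fixed_aux {O : Type} [CommRing O] [IsDomain O]
    (hchar : (p : O) = 0) {d : O} (hd : d ≠ 0)
    {φR : O →+* O} (hφR : ∀ x : O, φR x = x ^ p)
    {X : Type} [AddCommGroup X] [Module O X] [Module.Free O X] [Module.Finite O X]
    (φ : X →ₛₗ[φR] X) :
    ∃ n : ℕ, n ≤ Module.finrank O X ∧
      Nonempty ((φ.toAddMonoidHom - DistribMulAction.toAddMonoidHom X d).ker ≃+
        (Fin n → ZMod p)) := by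
  classical
  haveI : CharP O p := charO hchar
  set K := (φ.toAddMonoidHom - DistribMulAction.toAddMonoidHom X d).ker with hKdef
  have hmem : ∀ x : X, x ∈ K ↔ φ x = d • x := by
    intro x
    simp [hKdef, AddMonoidHom.mem_ker, sub_eq_zero]
  have ptors : ∀ x : K, p • x = 0 := by
    intro x
    apply Subtype.ext
    show ((p • x : K) : X) = (0 : X)
    push_cast
    rw [← Nat.cast_smul_eq_nsmul O p (x : X), hchar, zero_smul]
  letI : Module (ZMod p) K := AddCommGroup.zmodModule ptors
  have smul_coe : ∀ (a : ZMod p) (v : K), ((a • v : K) : X) = a.val • (v : X) := by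
    intro a v
    have h1 : a • v = ((a.val : ℕ) : ZMod p) • v := by
      rw [ZMod.natCast_val, ZMod.cast_id]
    rw [h1, Nat.cast_smul_eq_nsmul]
    push_cast
    rfl
  -- key linear independence transfer
  have key : ∀ (s : Finset K), (LinearIndependent (ZMod p) fun i : s => (i : K)) →
      LinearIndependent O (fun i : s => ((i : K) : X)) := by
    intro s hli
    set x : s → X := fun i => ((i : K) : X) with hxdef
    have hφx : ∀ i : s, φ (x i) = d • x i := fun i => (hmem _).mp (i : K).2
    have hFp : ∀ (t : Finset s) (g : s → ZMod p),
        (∑ i ∈ t, (g i).val • x i) = 0 → ∀ i ∈ t, g i = 0 := by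
      intro t g hsum
      refine linearIndependent_iff'.mp hli t g ?_
      have hcoe : ((∑ i ∈ t, g i • (i : K) : K) : X) = ∑ i ∈ t, (g i).val • x i := by
        push_cast
        exact Finset.sum_congr rfl fun i _ => smul_coe _ _
      apply Subtype.ext
      rw [hcoe, hsum]
      rfl
    have claim : ∀ (n : ℕ) (t : Finset s) (r : s → O), t.card ≤ n →
        (∀ i ∈ t, r i ≠ 0) → (∑ i ∈ t, r i • x i) = 0 → t = ∅ := by
      intro n
      induction n with
      | zero => intro t r ht _ _; exact Finset.card_eq_zero.mp (Nat.le_zero.mp ht)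
      | succ n ih =>
        intro t r htcard hrne hrel
        by_contra htne
        obtain ⟨j, hj⟩ := Finset.nonempty_of_ne_empty htne
        -- second relation via φ
        have hrel2 : (∑ i ∈ t, (r i ^ p) • x i) = 0 := by
          have h0 : φ (∑ i ∈ t, r i • x i) = 0 := by rw [hrel]; exact map_zero φ
          rw [map_sum] at h0
          have h1 : ∀ i ∈ t, φ (r i • x i) = d • ((r i ^ p) • x i) := by
            intro i _
            rw [map_smulₛₗ, hφR, hφx, smul_comm]
          rw [Finset.sum_congr rfl h1, ← Finset.smul_sum] at h0
          exact (smul_eq_zero.mp h0).resolve_left hd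
        set q : s → O := fun i => r j ^ p * r i - r j * r i ^ p with hqdef
        have hqj : q j = 0 := by simp only [hqdef]; ring
        have hq : ∀ i ∈ t, q i = 0 := by
          have hqrel : (∑ i ∈ t, q i • x i) = 0 := by
            have hterm : ∀ i ∈ t, q i • x i =
                r j ^ p • (r i • x i) - r j • (r i ^ p • x i) := by
              intro i _
              simp only [hqdef, sub_smul, mul_smul]
            rw [Finset.sum_congr rfl hterm, Finset.sum_sub_distrib, ← Finset.smul_sum,
              ← Finset.smul_sum, hrel, hrel2, smul_zero, smul_zero, sub_zero]
          set t2 := (t.erase j).filter (fun i => q i ≠ 0) with ht2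
          have hrel3 : (∑ i ∈ t2, q i • x i) = 0 := by
            rw [ht2, Finset.sum_filter_of_ne (by
              intro i _ hne hq0
              exact hne (by rw [hq0, zero_smul])),
              Finset.sum_erase _ (by rw [hqj, zero_smul]), hqrel]
          have ht2card : t2.card ≤ n := by
            have h1 : t2.card ≤ (t.erase j).card := Finset.card_filter_le _ _
            have h2 : (t.erase j).card = t.card - 1 := Finset.card_erase_of_mem hj
            omega
          have ht2empty : t2 = ∅ :=
            ih t2 q ht2card (fun i hi => (Finset.mem_filter.mp hi).2) hrel3
          intro i hi
          by_cases hij : i = j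
          · rw [hij]; exact hqj
          · by_contra hqi
            have : i ∈ t2 := Finset.mem_filter.mpr ⟨Finset.mem_erase.mpr ⟨hij, hi⟩, hqi⟩
            rw [ht2empty] at this
            exact absurd this (Finset.notMem_empty i)
        -- pass to the fraction field
        set F := FractionRing O
        set alg := algebraMap O F with halg
        have halginj : Function.Injective alg := IsFractionRing.injective O F
        haveI : CharP F p := charP_of_injective_ringHom halginj p
        have halgj : alg (r j) ≠ 0 := fun h =>
          hrne j hj (halginj (by rw [h, map_zero]))
        have hlam : ∀ i ∈ t, ∃ l : ZMod p, r i = ((l.val : ℕ) : O) * r j := by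
          intro i hi
          have hqi' : r j ^ p * r i = r j * r i ^ p := sub_eq_zero.mp (hq i hi)
          have hup : (alg (r i) / alg (r j)) ^ p = alg (r i) / alg (r j) := by
            rw [div_pow, div_eq_div_iff (pow_ne_zero _ halgj) halgj,
              ← map_pow, ← map_pow, ← map_mul, ← map_mul]
            exact congrArg alg (by linear_combination -hqi')
          obtain ⟨l, hl⟩ := exists_zmod_of_pow_eq hup
          refine ⟨l, halginj ?_⟩
          rw [map_mul, map_natCast]
          rw [div_eq_iff halgj] at hl
          exact hl
        set g : s → ZMod p := fun i => if h : i ∈ t then (hlam i h).choose else 0 with hgdef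
        have hg : ∀ i ∈ t, r i = (((g i).val : ℕ) : O) * r j := by
          intro i hi
          simp only [hgdef, dif_pos hi]
          exact (hlam i hi).choose_spec
        have h4 : r j • (∑ i ∈ t, (((g i).val : ℕ) : O) • x i) = 0 := by
          rw [Finset.smul_sum, ← hrel]
          apply Finset.sum_congr rfl
          intro i hi
          rw [smul_comm, ← mul_smul, ← hg i hi]
        have h5 : (∑ i ∈ t, (((g i).val : ℕ) : O) • x i) = 0 :=
          (smul_eq_zero.mp h4).resolve_left (hrne j hj)
        have h6 : (∑ i ∈ t, (g i).val • x i) = 0 := by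
          rw [← h5]
          exact Finset.sum_congr rfl fun i _ => (Nat.cast_smul_eq_nsmul O _ _).symm
        have hgj : g j = 0 := hFp t g h6 j hj
        have : r j = 0 := by
          rw [hg j hj, hgj, ZMod.val_zero, Nat.cast_zero, zero_mul]
        exact hrne j hj this
    rw [linearIndependent_iff']
    intro t r hrel i hi
    by_contra hne
    set t' := t.filter (fun i => r i ≠ 0) with ht'
    have hrel' : (∑ i ∈ t', r i • x i) = 0 := by
      rw [ht', Finset.sum_filter_of_ne (by
        intro i _ hne0 hr0
        exact hne0 (by rw [hr0, zero_smul])), hrel]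
    have ht'e : t' = ∅ :=
      claim t'.card t' r le_rfl (fun i hi => (Finset.mem_filter.mp hi).2) hrel'
    have : i ∈ t' := Finset.mem_filter.mpr ⟨hi, hne⟩
    rw [ht'e] at this
    exact absurd this (Finset.notMem_empty i)
  -- rank bound
  have hrank : Module.rank (ZMod p) K ≤ (Module.finrank O X : Cardinal) := by
    apply rank_le
    intro s hli
    have h1 := (key s hli).fintype_card_le_finrank
    simpa using h1
  haveI hfree : Module.Free (ZMod p) ↥K := Module.Free.of_divisionRing (ZMod p) ↥K
  haveI hfinK : Module.Finite (ZMod p) ↥K :=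
    (@Module.rank_lt_aleph0_iff (ZMod p) ↥K _ _ _ hfree _).mp
      (lt_of_le_of_lt hrank (Cardinal.nat_lt_aleph0 _))
  refine ⟨Module.finrank (ZMod p) K, Module.finrank_le_of_rank_le hrank, ⟨?_⟩⟩
  exact (@Module.finBasis (ZMod p) ↥K _ _ _ hfree _ hfinK).equivFun.toAddEquiv

end Aux


private lemma card_le_aux {p na nb nm : ℕ} [Fact p.Prime]
    {GA GM GB : Type*} [AddCommGroup GA] [AddCommGroup GM] [AddCommGroup GB]
    (eA : GA ≃+ (Fin na → ZMod p)) (eB : GB ≃+ (Fin nb → ZMod p))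
    (eM : GM ≃+ (Fin nm → ZMod p))
    (f : GM →+ GB) (g : GA →+ GM) (hg : Function.Injective g)
    (hker : ∀ x : GM, f x = 0 → x ∈ Set.range g) : nm ≤ na + nb := by
  classical
  haveI : Finite GA := Finite.of_equiv _ eA.symm.toEquiv
  haveI : Finite GB := Finite.of_equiv _ eB.symm.toEquiv
  haveI : Finite GM := Finite.of_equiv _ eM.symm.toEquiv
  have hp1 : 1 < p := (Fact.out : p.Prime).one_lt
  have hcardGA : Nat.card GA = p ^ na := by
    rw [Nat.card_congr eA.toEquiv]
    simp [Nat.card_eq_fintype_card, ZMod.card]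
  have hcardGB : Nat.card GB = p ^ nb := by
    rw [Nat.card_congr eB.toEquiv]
    simp [Nat.card_eq_fintype_card, ZMod.card]
  have hcardGM : Nat.card GM = p ^ nm := by
    rw [Nat.card_congr eM.toEquiv]
    simp [Nat.card_eq_fintype_card, ZMod.card]
  -- kernel injects into GA
  have hkerinj : ∃ j : f.ker → GA, Function.Injective j := by
    have hchoice : ∀ x : f.ker, ∃ a : GA, g a = (x : GM) := fun x =>
      hker (x : GM) (x.2)
    refine ⟨fun x => (hchoice x).choose, ?_⟩
    intro x y hxy
    have hx := (hchoice x).choose_spec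
    have hy := (hchoice y).choose_spec
    apply Subtype.ext
    rw [← hx, ← hy]
    exact congrArg g hxy
  obtain ⟨j, hj⟩ := hkerinj
  have h1 : Nat.card f.ker ≤ p ^ na := by
    rw [← hcardGA]
    exact Nat.card_le_card_of_injective j hj
  have h2 : Nat.card f.range ≤ p ^ nb := by
    rw [← hcardGB]
    exact Nat.card_le_card_of_injective (fun x : f.range => (x : GB)) Subtype.val_injective
  have h3 : Nat.card GM = Nat.card (GM ⧸ f.ker) * Nat.card f.ker :=
    AddSubgroup.card_eq_card_quotient_mul_card_addSubgroup f.ker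
  have h4 : Nat.card (GM ⧸ f.ker) = Nat.card f.range :=
    Nat.card_congr (QuotientAddGroup.quotientKerEquivRange f).toEquiv
  have h5 : p ^ nm ≤ p ^ nb * p ^ na := by
    rw [← hcardGM]
    rw [h3, h4]
    exact Nat.mul_le_mul h2 h1
  have h6 : p ^ nm ≤ p ^ (na + nb) := by
    rw [pow_add]
    rw [Nat.mul_comm] at h5
    exact h5
  exact (Nat.pow_le_pow_iff_right hp1).mp h6

/-- subadditivity of Frobenius fixed points in short exact sequences.
Let `0 → A → M → B → 0` be a short exact sequence of finite free modules over the tilt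
`O = O_{C_p^♭}` (a char-`p` domain with divisible-ℚ-valued valuation measured by `dpow`
and `p`-power Frobenius `φR`), equipped with `φR`-semilinear Frobenii commuting with
the maps of the sequence, each an isomorphism after inverting `d`.  Then for every
`c ∈ ℚ_{≥0}` the fixed spaces `X^{φ = d^c} = Ker(φ - d^c)` are finite-dimensional
`F_p`-vector spaces of dimension at most the rank of the corresponding module, and
`dim M^{φ=d^c} ≤ dim A^{φ=d^c} + dim B^{φ=d^c}`. -/
theorem stmt16
    {p : ℕ} [Fact p.Prime]
    {O : Type} [CommRing O] [IsDomain O]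
    (hchar : (p : O) = 0)
    (dpow : ℚ → O)
    (hdpow_zero : dpow 0 = 1)
    (hdpow_add : ∀ a b : ℚ, 0 ≤ a → 0 ≤ b → dpow (a + b) = dpow a * dpow b)
    (hdpow_ne : ∀ a : ℚ, 0 ≤ a → dpow a ≠ 0)
    (hdpow_unit : ∀ a : ℚ, 0 ≤ a → (IsUnit (dpow a) ↔ a = 0))
    (hval : ∀ r : O, r ≠ 0 → ∃ a : ℚ, 0 ≤ a ∧ ∃ u : Oˣ, r = dpow a * (u : O))
    (φR : O →+* O)
    (hφR_pow : ∀ x : O, φR x = x ^ p)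
    {A M B : Type} [AddCommGroup A] [Module O A] [AddCommGroup M] [Module O M]
    [AddCommGroup B] [Module O B]
    [Module.Free O A] [Module.Finite O A] [Module.Free O M] [Module.Finite O M]
    [Module.Free O B] [Module.Finite O B]
    (φA : A →ₛₗ[φR] A) (φM : M →ₛₗ[φR] M) (φB : B →ₛₗ[φR] B)
    (hφA_inj : Function.Injective φA)
    (hφA_cok : ∀ y : A, ∃ (n : ℚ) (x : A), 0 ≤ n ∧ dpow n • y = φA x)
    (hφM_inj : Function.Injective φM)
    (hφM_cok : ∀ y : M, ∃ (n : ℚ) (x : M), 0 ≤ n ∧ dpow n • y = φM x)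
    (hφB_inj : Function.Injective φB)
    (hφB_cok : ∀ y : B, ∃ (n : ℚ) (x : B), 0 ≤ n ∧ dpow n • y = φB x)
    -- the short exact sequence 0 → A → M → B → 0
    (ι : A →ₗ[O] M) (π : M →ₗ[O] B)
    (hι : Function.Injective ι) (hπ : Function.Surjective π)
    (hexact : Function.Exact ι π)
    -- compatibility of the Frobenii with the maps of the sequence
    (hcommι : ∀ a : A, φM (ι a) = ι (φA a))
    (hcommπ : ∀ m : M, φB (π m) = π (φM m))
    (c : ℚ) (hc : 0 ≤ c) :
    ∃ a b m : ℕ,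
      Nonempty ((φA.toAddMonoidHom - DistribMulAction.toAddMonoidHom A (dpow c)).ker ≃+
          (Fin a → ZMod p)) ∧
      Nonempty ((φB.toAddMonoidHom - DistribMulAction.toAddMonoidHom B (dpow c)).ker ≃+
          (Fin b → ZMod p)) ∧
      Nonempty ((φM.toAddMonoidHom - DistribMulAction.toAddMonoidHom M (dpow c)).ker ≃+
          (Fin m → ZMod p)) ∧
      a ≤ Module.finrank O A ∧ b ≤ Module.finrank O B ∧ m ≤ Module.finrank O M ∧
      m ≤ a + b := by
  classical
  have hd : dpow c ≠ 0 := hdpow_ne c hc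
  obtain ⟨na, hna, ⟨eA⟩⟩ := fixed_aux hchar hd hφR_pow φA
  obtain ⟨nb, hnb, ⟨eB⟩⟩ := fixed_aux hchar hd hφR_pow φB
  obtain ⟨nm, hnm, ⟨eM⟩⟩ := fixed_aux hchar hd hφR_pow φM
  refine ⟨na, nb, nm, ⟨eA⟩, ⟨eB⟩, ⟨eM⟩, hna, hnb, hnm, ?_⟩
  have hmemA : ∀ x : A,
      x ∈ (φA.toAddMonoidHom - DistribMulAction.toAddMonoidHom A (dpow c)).ker ↔
        φA x = dpow c • x := by
    intro x; simp [AddMonoidHom.mem_ker, sub_eq_zero]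
  have hmemB : ∀ x : B,
      x ∈ (φB.toAddMonoidHom - DistribMulAction.toAddMonoidHom B (dpow c)).ker ↔
        φB x = dpow c • x := by
    intro x; simp [AddMonoidHom.mem_ker, sub_eq_zero]
  have hmemM : ∀ x : M,
      x ∈ (φM.toAddMonoidHom - DistribMulAction.toAddMonoidHom M (dpow c)).ker ↔
        φM x = dpow c • x := by
    intro x; simp [AddMonoidHom.mem_ker, sub_eq_zero]
  have hπmem : ∀ x : (φM.toAddMonoidHom - DistribMulAction.toAddMonoidHom M (dpow c)).ker,
      π (x : M) ∈ (φB.toAddMonoidHom - DistribMulAction.toAddMonoidHom B (dpow c)).ker := by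
    intro x
    rw [hmemB, hcommπ, (hmemM _).mp x.2, map_smul]
  have hιmem : ∀ a : (φA.toAddMonoidHom - DistribMulAction.toAddMonoidHom A (dpow c)).ker,
      ι (a : A) ∈ (φM.toAddMonoidHom - DistribMulAction.toAddMonoidHom M (dpow c)).ker := by
    intro a
    rw [hmemM, hcommι, (hmemA _).mp a.2, map_smul]
  set f : (φM.toAddMonoidHom - DistribMulAction.toAddMonoidHom M (dpow c)).ker →+
      (φB.toAddMonoidHom - DistribMulAction.toAddMonoidHom B (dpow c)).ker :=
    AddMonoidHom.mk' (fun x => ⟨π (x : M), hπmem x⟩)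
      (fun x y => by apply Subtype.ext; simp) with hf
  set g : (φA.toAddMonoidHom - DistribMulAction.toAddMonoidHom A (dpow c)).ker →+
      (φM.toAddMonoidHom - DistribMulAction.toAddMonoidHom M (dpow c)).ker :=
    AddMonoidHom.mk' (fun a => ⟨ι (a : A), hιmem a⟩)
      (fun x y => by apply Subtype.ext; simp) with hg
  have hginj : Function.Injective g := by
    intro a b hab
    apply Subtype.ext
    apply hι
    exact congrArg Subtype.val hab
  have hker : ∀ x, f x = 0 → x ∈ Set.range g := by
    intro x hx
    have hπx : π (x : M) = 0 := congrArg Subtype.val hx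
    obtain ⟨a, ha⟩ := (hexact (x : M)).mp hπx
    have haK : a ∈ (φA.toAddMonoidHom - DistribMulAction.toAddMonoidHom A (dpow c)).ker := by
      rw [hmemA]
      apply hι
      rw [← hcommι, map_smul, ha]
      exact (hmemM _).mp x.2
    exact ⟨⟨a, haK⟩, Subtype.ext ha⟩
  exact card_le_aux eA eB eM f g hginj hker
end
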